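/- arXiv:2406.01068 — 16 statements merged into one kernel-verified Lean document; each statement's English description precedes it below -/
import Mathlib

section
/- Let G be a finite connected simple graph and let H be an isometric subgraph of G. Then for every vertex v of G and all vertices x, y of H, the sets γ(H,x,v) and γ(H,y,v) have a common element, i.e. γ(H,x,v) ∩ γ(H,y,v) ≠ ∅. -/
/-- A subgraph `H` of `G` is isometric if the distance inside `H`
agrees with the distance in `G` for all pairs of vertices of `H`. -/
def IsIsometricSubgraph {V : Type*} (G : SimpleGraph V) (H : G.Subgraph) : Prop :=
  ∀ x y : H.verts, H.coe.dist x y = G.dist x.1 y.1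

/-- `γ(H,x,v) = {y ∈ V(H) : d_G(y,x) ≤ d_G(v,x)}`. -/
def gammaSet {V : Type*} (G : SimpleGraph V) (H : G.Subgraph) (x v : V) : Set V :=
  {y | y ∈ H.verts ∧ G.dist y x ≤ G.dist v x}

/-! On a geodesic of `H` from `x` to `y`, which by isometry is a geodesic of `G`, take the vertex `z`
at distance `m = min (d v x) (d x y)` from `x`. Then `d z x ≤ d v x`, and
`d z y ≤ d x y - m ≤ d v y` by the triangle inequality `d x y ≤ d x v + d v y`. -/

namespace SimpleGraph.Walk

variable {V : Type*} {G : SimpleGraph V} {u v : V}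

lemma dist_getVert_le (p : G.Walk u v) (n : ℕ) : G.dist u (p.getVert n) ≤ n :=
  (dist_le (p.take n)).trans (by simp [take_length])

lemma dist_getVert_le_length_sub (p : G.Walk u v) (n : ℕ) :
    G.dist (p.getVert n) v ≤ p.length - n :=
  (dist_le (p.drop n)).trans_eq (p.drop_length n)

end SimpleGraph.Walk

lemma IsIsometricSubgraph.exists_mem_verts_dist_le_and_dist_le_sub {V : Type*}
    {G : SimpleGraph V} {H : G.Subgraph} (hiso : IsIsometricSubgraph G H) (hH : H.Connected)
    {x y : V} (hx : x ∈ H.verts) (hy : y ∈ H.verts) (n : ℕ) :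
    ∃ z ∈ H.verts, G.dist x z ≤ n ∧ G.dist z y ≤ G.dist x y - n := by
  obtain ⟨p, hp⟩ := (hH ⟨x, hx⟩ ⟨y, hy⟩).exists_walk_length_eq_dist
  refine ⟨p.getVert n, (p.getVert n).2, ?_, ?_⟩
  · exact (hiso ⟨x, hx⟩ _).symm.trans_le (p.dist_getVert_le n)
  · calc G.dist (p.getVert n) y = H.coe.dist (p.getVert n) ⟨y, hy⟩ := (hiso _ ⟨y, hy⟩).symm
      _ ≤ p.length - n := p.dist_getVert_le_length_sub n
      _ = G.dist x y - n := by rw [hp, hiso]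

theorem gammaSet_pairwise_intersect_general {V : Type*} (G : SimpleGraph V)
    (hG : G.Connected) (H : G.Subgraph) (hHconn : H.Connected)
    (hiso : IsIsometricSubgraph G H) (v : V) (x y : V)
    (hx : x ∈ H.verts) (hy : y ∈ H.verts) :
    (gammaSet G H x v ∩ gammaSet G H y v).Nonempty := by
  obtain ⟨z, hzH, hxz, hzy⟩ :=
    hiso.exists_mem_verts_dist_le_and_dist_le_sub hHconn hx hy (min (G.dist v x) (G.dist x y))
  have htri : G.dist x y ≤ G.dist v x + G.dist v y := by
    simpa only [G.dist_comm (u := x)] using hG.dist_triangle (u := x) (v := v) (w := y)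
  refine ⟨z, ⟨hzH, ?_⟩, hzH, ?_⟩
  · rw [G.dist_comm]
    omega
  · omega

/-- if `G` is a finite connected graph and `H` is a connected isometric
subgraph, then for every `v ∈ V(G)` and all `x, y ∈ V(H)`, the sets `γ(H,x,v)` and
`γ(H,y,v)` intersect. -/
theorem gammaSet_pairwise_intersect {V : Type*} [Fintype V] (G : SimpleGraph V)
    (hG : G.Connected) (H : G.Subgraph) (hHconn : H.Connected)
    (hiso : IsIsometricSubgraph G H) (v : V) (x y : V)
    (hx : x ∈ H.verts) (hy : y ∈ H.verts) :
    (gammaSet G H x v ∩ gammaSet G H y v).Nonempty :=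
  gammaSet_pairwise_intersect_general G hG H hHconn hiso v x y hx hy
end

section
/- Let G be a finite connected simple graph and let H be an isometric subgraph of G which is a Helly graph. Then for every vertex v of G, the wide shadow S_H(v) is nonempty. -/
/-- The wide shadow `S_H(v)` of a vertex `v` on a subgraph `H`:
all `y ∈ V(H)` with `d_G(y,x) ≤ d_G(v,x)` for every `x ∈ V(H)`. -/
def wideShadow {V : Type*} (G : SimpleGraph V) (H : G.Subgraph) (v : V) : Set V :=
  {y | y ∈ H.verts ∧ ∀ x ∈ H.verts, G.dist y x ≤ G.dist v x}

/-- A graph is Helly if every nonempty, pairwise-intersecting family of balls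
has a common point. -/
def IsHellyGraph {W : Type*} (H : SimpleGraph W) : Prop :=
  ∀ s : Set (W × ℕ), s.Nonempty →
    (∀ p ∈ s, ∀ q ∈ s, ∃ w, H.dist p.1 w ≤ p.2 ∧ H.dist q.1 w ≤ q.2) →
    ∃ w, ∀ p ∈ s, H.dist p.1 w ≤ p.2

/-- Splitting a walk at its `k`-th vertex bounds the distances to the endpoints. -/
lemma walk_split {V : Type*} {G : SimpleGraph V} (hc : G.Connected) :
    ∀ {u v : V} (p : G.Walk u v) (k : ℕ),
      G.dist u (p.getVert k) ≤ k ∧ G.dist (p.getVert k) v ≤ p.length - k := by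
  intro u v p
  induction p with
  | nil => intro k; exact ⟨by simp [SimpleGraph.Walk.getVert, SimpleGraph.dist_self], by simp [SimpleGraph.Walk.getVert]⟩
  | @cons u u' v h q ih =>
    intro k
    match k with
    | 0 =>
      simp only [SimpleGraph.Walk.getVert_zero]
      exact ⟨by simp, by simpa using SimpleGraph.dist_le (SimpleGraph.Walk.cons h q)⟩
    | k + 1 =>
      rw [SimpleGraph.Walk.getVert_cons_succ]
      obtain ⟨h1, h2⟩ := ih k
      constructor
      · calc G.dist u (q.getVert k) ≤ G.dist u u' + G.dist u' (q.getVert k) :=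
              hc.dist_triangle
          _ ≤ 1 + k := by
              have : G.dist u u' = 1 := (SimpleGraph.dist_eq_one_iff_adj).2 h
              omega
          _ = k + 1 := by omega
      · simpa [SimpleGraph.Walk.length_cons] using h2

/-- if `G` is a finite connected graph and `H` a connected isometric
subgraph of `G` which is a Helly graph, then the wide shadow of every vertex of `G`
on `H` is nonempty. -/
theorem wideShadow_nonempty {V : Type*} [Fintype V] (G : SimpleGraph V)
    (hG : G.Connected) (H : G.Subgraph) (hHconn : H.Connected)
    (hiso : IsIsometricSubgraph G H) (hHelly : IsHellyGraph H.coe) (v : V) :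
    (wideShadow G H v).Nonempty := by
  classical
  have hconn : H.coe.Connected := hHconn
  obtain ⟨x0⟩ := hconn.nonempty
  set s : Set (H.verts × ℕ) := {p | p.2 = G.dist v p.1.1} with hs
  have hne : s.Nonempty := ⟨(x0, G.dist v x0.1), rfl⟩
  have hpair : ∀ p ∈ s, ∀ q ∈ s,
      ∃ w, H.coe.dist p.1 w ≤ p.2 ∧ H.coe.dist q.1 w ≤ q.2 := by
    rintro ⟨x, kx⟩ hx ⟨y, ky⟩ hy
    simp only [hs, Set.mem_setOf_eq] at hx hy
    subst hx; subst hy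
    obtain ⟨p, hp⟩ := (hconn x y).exists_walk_length_eq_dist
    set k := min (G.dist v x.1) p.length with hk
    obtain ⟨h1, h2⟩ := walk_split hconn p k
    refine ⟨p.getVert k, ?_, ?_⟩
    · exact h1.trans (min_le_left _ _)
    · have hlen : p.length ≤ G.dist v x.1 + G.dist v y.1 := by
        rw [hp, hiso x y]
        calc G.dist x.1 y.1 ≤ G.dist x.1 v + G.dist v y.1 := hG.dist_triangle
          _ = G.dist v x.1 + G.dist v y.1 := by rw [SimpleGraph.dist_comm]
      show H.coe.dist y (p.getVert k) ≤ G.dist v y.1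
      rw [SimpleGraph.dist_comm]
      refine h2.trans ?_
      rcases min_cases (G.dist v x.1) p.length with ⟨he, _⟩ | ⟨he, _⟩ <;> omega
  obtain ⟨w, hw⟩ := hHelly s hne hpair
  refine ⟨w.1, w.2, ?_⟩
  intro x hx
  have h := hw (⟨x, hx⟩, G.dist v x) rfl
  rw [hiso ⟨x, hx⟩ w] at h
  rw [SimpleGraph.dist_comm]
  exact h
end

section
/- Let G be a finite connected simple graph and let H be an isometric subgraph of G which is a Helly graph. Then for every edge uv of G and every vertex y ∈ S_H(u), there exists a vertex z ∈ S_H(v) with z = y or z adjacent to y in H; in particular d(y, S_H(v)) ≤ 1. -/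
/-- Vertices along a walk are close to both endpoints. -/
lemma getVert_dist_le {W : Type*} {G : SimpleGraph W} (hc : G.Connected) {a b : W}
    (p : G.Walk a b) (k : ℕ) :
    G.dist a (p.getVert k) ≤ k ∧ G.dist (p.getVert k) b ≤ p.length - k := by
  induction p generalizing k with
  | nil => simp [SimpleGraph.Walk.getVert, SimpleGraph.dist_self]
  | @cons a c b h q ih =>
    cases k with
    | zero =>
      refine ⟨by simp, ?_⟩
      simpa using SimpleGraph.dist_le (SimpleGraph.Walk.cons h q)
    | succ k =>
      rw [SimpleGraph.Walk.getVert_cons_succ]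
      refine ⟨?_, ?_⟩
      · calc G.dist a (q.getVert k) ≤ G.dist a c + G.dist c (q.getVert k) :=
              hc.dist_triangle
          _ ≤ 1 + k := by
              have h1 : G.dist a c ≤ 1 := SimpleGraph.dist_le (SimpleGraph.Walk.cons h .nil)
              exact Nat.add_le_add h1 (ih k).1
          _ = k + 1 := Nat.add_comm 1 k
      · have := (ih k).2
        simpa [SimpleGraph.Walk.length_cons, Nat.succ_sub_succ] using this

/-- Two balls whose radii sum to at least the distance between their
centers intersect (in a connected graph). -/
lemma ball_inter {W : Type*} {G : SimpleGraph W} (hc : G.Connected) (c1 c2 : W) (r1 r2 : ℕ)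
    (h : G.dist c1 c2 ≤ r1 + r2) : ∃ w, G.dist c1 w ≤ r1 ∧ G.dist c2 w ≤ r2 := by
  obtain ⟨p, hp⟩ := hc.exists_walk_length_eq_dist c1 c2
  refine ⟨p.getVert (min r1 p.length), ?_, ?_⟩
  · exact ((getVert_dist_le hc p _).1).trans (min_le_left _ _)
  · have h2 := (getVert_dist_le hc p (min r1 p.length)).2
    rw [SimpleGraph.dist_comm]
    refine h2.trans ?_
    omega

/-- if `G` is a finite connected graph, `H` a connected isometric
subgraph of `G` which is a Helly graph, `uv` an edge of `G` and `y ∈ S_H(u)`,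
then there is `z ∈ S_H(v)` with `z = y` or `z` adjacent to `y` in `H`;
in particular `d(y, S_H(v)) ≤ 1`. -/
theorem wideShadow_adj_step {V : Type*} [Fintype V] (G : SimpleGraph V)
    (hG : G.Connected) (H : G.Subgraph) (hHconn : H.Connected)
    (hiso : IsIsometricSubgraph G H) (hHelly : IsHellyGraph H.coe)
    (u v : V) (huv : G.Adj u v) (y : V) (hy : y ∈ wideShadow G H u) :
    ∃ z ∈ wideShadow G H v, z = y ∨ H.Adj z y := by
  obtain ⟨hyH, hyd⟩ := hy
  have hHc : H.coe.Connected := hHconn.coe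
  have huv1 : G.dist u v ≤ 1 := SimpleGraph.dist_le (SimpleGraph.Walk.cons huv .nil)
  -- the family of balls
  set s : Set (H.verts × ℕ) :=
    insert (⟨⟨y, hyH⟩, 1⟩ : H.verts × ℕ) {p | p.2 = G.dist v p.1.1} with hs
  -- every pair of balls in `s` has centers within the sum of radii
  have key : ∀ p ∈ s, ∀ q ∈ s, H.coe.dist p.1 q.1 ≤ p.2 + q.2 := by
    rintro ⟨p1, p2⟩ hp ⟨q1, q2⟩ hq
    have hcases : ∀ (x1 : H.verts) (x2 : ℕ),
        (⟨x1, x2⟩ : H.verts × ℕ) ∈ s →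
        (x1 = ⟨y, hyH⟩ ∧ x2 = 1) ∨ x2 = G.dist v x1.1 := by
      rintro x1 x2 hx
      rcases hx with hx | hx
      · left; exact ⟨congrArg Prod.fst hx, congrArg Prod.snd hx⟩
      · right; exact hx
    rcases hcases p1 p2 hp with ⟨hp1, hp2⟩ | hp2 <;>
      rcases hcases q1 q2 hq with ⟨hq1, hq2⟩ | hq2
    · subst hp1 hq1; simp [hp2, hq2, SimpleGraph.dist_self]
    · subst hp1
      rw [hiso, hp2, hq2]
      calc G.dist y q1.1 ≤ G.dist u q1.1 := hyd q1.1 q1.2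
        _ ≤ G.dist u v + G.dist v q1.1 := hG.dist_triangle
        _ ≤ 1 + G.dist v q1.1 := Nat.add_le_add_right huv1 _
    · subst hq1
      rw [hiso, hp2, hq2, SimpleGraph.dist_comm]
      calc G.dist y p1.1 ≤ G.dist u p1.1 := hyd p1.1 p1.2
        _ ≤ G.dist u v + G.dist v p1.1 := hG.dist_triangle
        _ ≤ 1 + G.dist v p1.1 := Nat.add_le_add_right huv1 _
        _ = G.dist v p1.1 + 1 := Nat.add_comm _ _
    · rw [hiso, hp2, hq2]
      calc G.dist p1.1 q1.1 ≤ G.dist p1.1 v + G.dist v q1.1 := hG.dist_triangle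
        _ = G.dist v p1.1 + G.dist v q1.1 := by rw [SimpleGraph.dist_comm]
  obtain ⟨w, hw⟩ := hHelly s ⟨_, Set.mem_insert _ _⟩
    (fun p hp q hq => ball_inter hHc p.1 q.1 p.2 q.2 (key p hp q hq))
  have hwy : H.coe.dist (⟨y, hyH⟩ : H.verts) w ≤ 1 := hw _ (Set.mem_insert _ _)
  have hwx : ∀ x : H.verts, H.coe.dist x w ≤ G.dist v x.1 := fun x =>
    hw ⟨x, G.dist v x.1⟩ (Set.mem_insert_iff.mpr (Or.inr rfl))
  refine ⟨w.1, ⟨w.2, fun x hx => ?_⟩, ?_⟩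
  · have := hwx ⟨x, hx⟩
    rwa [SimpleGraph.dist_comm, hiso] at this
  · interval_cases h1 : H.coe.dist (⟨y, hyH⟩ : H.verts) w
    · left
      have : (⟨y, hyH⟩ : H.verts) = w := (hHc.dist_eq_zero_iff).mp h1
      exact congrArg Subtype.val this.symm
    · right
      have hadj : H.coe.Adj ⟨y, hyH⟩ w := SimpleGraph.dist_eq_one_iff_adj.mp h1
      exact (H.coe_adj _ _ |>.mp hadj).symm
end

section
/- Let G be a finite connected simple graph and let H be an isometric subgraph of G which is a Helly graph. Then for every walk v_0, v_1, …, v_n in G and every y_0 ∈ S_H(v_0), there exist vertices y_0, y_1, …, y_n of H such that y_i ∈ S_H(v_i) for every i, and for each i < n either y_{i+1} = y_i or y_{i+1} is adjacent to y_i in H. -/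
open SimpleGraph

/-- Split a walk at position `k`. -/
lemma walk_split_s3 {W : Type*} {H : SimpleGraph W} {x x' : W} (p : H.Walk x x') :
    ∀ k : ℕ, ∃ (w : W) (p1 : H.Walk x w) (p2 : H.Walk w x'),
      p1.length ≤ k ∧ p2.length ≤ p.length - k := by
  induction p with
  | nil => exact fun k => ⟨_, .nil, .nil, by simp, by simp⟩
  | @cons u b c h q ih =>
    intro k
    cases k with
    | zero => exact ⟨u, .nil, .cons h q, by simp, by simp⟩
    | succ k' =>
      obtain ⟨w, p1, p2, hw1, hw2⟩ := ih k'
      exact ⟨w, .cons h p1, p2, by simpa using Nat.succ_le_succ hw1, by simpa using hw2⟩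

lemma dist_split {W : Type*} {H : SimpleGraph W} {x x' : W} (hr : H.Reachable x x')
    {a b : ℕ} (hab : H.dist x x' ≤ a + b) :
    ∃ w, H.dist x w ≤ a ∧ H.dist w x' ≤ b := by
  obtain ⟨p, hp⟩ := hr.exists_walk_length_eq_dist
  obtain ⟨w, p1, p2, h1, h2⟩ := walk_split_s3 p a
  refine ⟨w, (SimpleGraph.dist_le p1).trans h1, (SimpleGraph.dist_le p2).trans ?_⟩
  omega

/-- The key single-step lemma. -/
lemma wideShadow_step {V : Type*} [Fintype V] (G : SimpleGraph V)
    (hG : G.Connected) (H : G.Subgraph) (hHconn : H.Connected)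
    (hiso : IsIsometricSubgraph G H) (hHelly : IsHellyGraph H.coe)
    {a b : V} (hab : G.Adj a b) {y : V} (hy : y ∈ wideShadow G H a) :
    ∃ y', y' ∈ wideShadow G H b ∧ (y' = y ∨ H.Adj y' y) := by
  obtain ⟨hyH, hyd⟩ := hy
  set yy : H.verts := ⟨y, hyH⟩
  set s : Set (H.verts × ℕ) := {p | p = (yy, 1) ∨ p.2 = G.dist b p.1.1} with hs
  have hconn' : H.coe.Connected := hHconn.coe
  have hdist : ∀ (u w : H.verts), H.coe.dist u w = G.dist u.1 w.1 := hiso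
  have key : ∀ p ∈ s, ∀ q ∈ s, H.coe.dist p.1 q.1 ≤ p.2 + q.2 := by
    rintro p hp q hq
    rcases hp with hp | hp <;> rcases hq with hq | hq
    · subst hp; subst hq; simp [SimpleGraph.dist_self]
    · subst hp
      rw [hdist]
      calc G.dist yy.1 q.1.1 ≤ G.dist a q.1.1 := hyd _ q.1.2
        _ ≤ G.dist a b + G.dist b q.1.1 := hG.dist_triangle
        _ ≤ 1 + q.2 := by
            have hdab : G.dist a b ≤ 1 := (SimpleGraph.dist_le hab.toWalk).trans (by simp)
            rw [hq]; omega
    · subst hq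
      rw [hdist, SimpleGraph.dist_comm]
      calc G.dist yy.1 p.1.1 ≤ G.dist a p.1.1 := hyd _ p.1.2
        _ ≤ G.dist a b + G.dist b p.1.1 := hG.dist_triangle
        _ ≤ p.2 + 1 := by
            have hdab : G.dist a b ≤ 1 := (SimpleGraph.dist_le hab.toWalk).trans (by simp)
            rw [hp]; omega
    · rw [hdist, hp, hq]
      calc G.dist p.1.1 q.1.1 ≤ G.dist p.1.1 b + G.dist b q.1.1 := hG.dist_triangle
        _ = G.dist b p.1.1 + G.dist b q.1.1 := by rw [SimpleGraph.dist_comm]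
  obtain ⟨w, hw⟩ := hHelly s ⟨(yy, 1), Or.inl rfl⟩ (by
    intro p hp q hq
    obtain ⟨w, hw1, hw2⟩ := dist_split (hconn'.preconnected p.1 q.1) (key p hp q hq)
    exact ⟨w, hw1, by rwa [SimpleGraph.dist_comm]⟩)
  have hwy : H.coe.dist yy w ≤ 1 := hw (yy, 1) (Or.inl rfl)
  have hwx : ∀ x : H.verts, H.coe.dist x w ≤ G.dist b x.1 := fun x =>
    hw (x, G.dist b x.1) (Or.inr rfl)
  refine ⟨w.1, ⟨w.2, fun x hx => ?_⟩, ?_⟩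
  · have := hwx ⟨x, hx⟩
    rwa [hdist, SimpleGraph.dist_comm] at this
  · rcases Nat.le_one_iff_eq_zero_or_eq_one.mp hwy with h | h
    · left
      have := (hconn'.dist_eq_zero_iff (u := yy) (v := w)).mp h
      exact congrArg Subtype.val this.symm
    · right
      have hadj : H.coe.Adj yy w := SimpleGraph.dist_eq_one_iff_adj.mp h
      exact (H.coe_adj yy w ▸ hadj).symm

/-- if `G` is a finite connected graph and `H` a connected isometric
subgraph of `G` which is a Helly graph, then along any walk `v_0, v_1, …, v_n` in `G`,
starting from any `y_0 ∈ S_H(v_0)`, one can choose `y_i ∈ S_H(v_i)` such that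
consecutive `y_i`'s are equal or adjacent in `H`. -/
theorem wideShadow_walk {V : Type*} [Fintype V] (G : SimpleGraph V)
    (hG : G.Connected) (H : G.Subgraph) (hHconn : H.Connected)
    (hiso : IsIsometricSubgraph G H) (hHelly : IsHellyGraph H.coe)
    (n : ℕ) (v : Fin (n + 1) → V)
    (hwalk : ∀ i : Fin n, G.Adj (v i.castSucc) (v i.succ))
    (y₀ : V) (hy₀ : y₀ ∈ wideShadow G H (v 0)) :
    ∃ y : Fin (n + 1) → V, y 0 = y₀ ∧ (∀ i, y i ∈ wideShadow G H (v i)) ∧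
      ∀ i : Fin n, y i.succ = y i.castSucc ∨ H.Adj (y i.succ) (y i.castSucc) := by
  induction n with
  | zero =>
    refine ⟨fun _ => y₀, rfl, fun i => ?_, fun i => i.elim0⟩
    have : i = 0 := Fin.fin_one_eq_zero i
    rw [this]; exact hy₀
  | succ n ih =>
    obtain ⟨y, hy0, hyS, hyadj⟩ := ih (fun i => v i.castSucc)
      (fun j => by have := hwalk j.castSucc; rwa [Fin.succ_castSucc] at this)
      (by simpa using hy₀)
    obtain ⟨y', hy'S, hy'adj⟩ := wideShadow_step G hG H hHconn hiso hHelly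
      (hwalk (Fin.last n)) (hyS (Fin.last n))
    refine ⟨Fin.snoc y y', ?_, ?_, ?_⟩
    · rw [show (0 : Fin (n + 2)) = Fin.castSucc 0 from (Fin.castSucc_zero).symm,
        Fin.snoc_castSucc]
      exact hy0
    · intro i
      refine Fin.lastCases ?_ (fun j => ?_) i
      · rw [Fin.snoc_last, ← Fin.succ_last]
        exact hy'S
      · rw [Fin.snoc_castSucc]
        exact hyS j
    · intro i
      refine Fin.lastCases ?_ (fun j => ?_) i
      · rw [Fin.succ_last, Fin.snoc_last, Fin.snoc_castSucc]
        exact hy'adj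
      · rw [Fin.succ_castSucc, Fin.snoc_castSucc, Fin.snoc_castSucc]
        exact hyadj j
end

section
/- Let G be a finite connected Helly graph of diameter d ≥ 1 and let u, v be vertices of G with d_G(u,v) = d. Then there exists a vertex z ≠ v of G with N[v] ⊆ N[z] and d_G(u,z) ≤ d − 1. In particular, every finite connected Helly graph on at least two vertices has a corner. -/
/-- A vertex `x` is a corner of `G` if some neighbor `y` of `x`
satisfies `N[x] ⊆ N[y]`. -/
def IsGraphCorner {W : Type*} (G : SimpleGraph W) (x : W) : Prop :=
  ∃ y, G.Adj x y ∧ insert x (G.neighborSet x) ⊆ insert y (G.neighborSet y)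

/-! The balls `B(w, 1)`, `w ∈ N[v]`, pairwise meet at `v`, and each meets `B(u, d - 1)` because
`d(u, w) ≤ d`. A common point `z` of all of them, which exists by the Helly property, satisfies
`N[v] ⊆ N[z]` and `d(u, z) ≤ d - 1 < d(u, v)`, so `z ≠ v` and `v` is a corner. -/

namespace SimpleGraph

variable {V : Type*} {G : SimpleGraph V}

lemma Reachable.exists_dist_le_and_dist_le_of_dist_le_add {u w : V} (huw : G.Reachable u w)
    {r s : ℕ} (h : G.dist u w ≤ r + s) : ∃ x, G.dist u x ≤ r ∧ G.dist w x ≤ s := by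
  obtain ⟨p, hp⟩ := huw.exists_walk_length_eq_dist
  refine ⟨p.getVert r, (dist_le (p.take r)).trans (by simp), ?_⟩
  rw [dist_comm]
  exact (dist_le (p.drop r)).trans (by simp only [Walk.drop_length]; omega)

lemma Connected.dist_le_one_iff (hG : G.Connected) {a b : V} :
    G.dist b a ≤ 1 ↔ b ∈ insert a (G.neighborSet a) := by
  rw [← Nat.cast_le (α := ℕ∞), (hG b a).coe_dist_eq_edist, Nat.cast_one,
    edist_le_one_iff_adj_or_eq]
  simp only [Set.mem_insert_iff, mem_neighborSet, adj_comm, or_comm]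

end SimpleGraph

theorem IsHellyGraph.exists_closedNeighborhood_subset {V : Type*} {G : SimpleGraph V}
    (hHelly : IsHellyGraph G) (hG : G.Connected) {u v : V} {r : ℕ}
    (h : ∀ w ∈ insert v (G.neighborSet v), G.dist u w ≤ r + 1) :
    ∃ z, insert v (G.neighborSet v) ⊆ insert z (G.neighborSet z) ∧ G.dist u z ≤ r := by
  set balls : Set (V × ℕ) := insert (u, r) ((·, 1) '' insert v (G.neighborSet v))
  have meets_ball_u : ∀ p ∈ balls, ∃ x, G.dist u x ≤ r ∧ G.dist p.1 x ≤ p.2 := by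
    rintro p (rfl | ⟨w, hw, rfl⟩)
    · exact ⟨u, by simp⟩
    · exact (hG u w).exists_dist_le_and_dist_le_of_dist_le_add (h w hw)
  have hpair : ∀ p ∈ balls, ∀ q ∈ balls, ∃ x, G.dist p.1 x ≤ p.2 ∧ G.dist q.1 x ≤ q.2 := by
    rintro p hp q (rfl | ⟨w, hw, rfl⟩)
    · obtain ⟨x, hux, hpx⟩ := meets_ball_u p hp
      exact ⟨x, hpx, hux⟩
    rcases hp with rfl | ⟨w', hw', rfl⟩
    · exact meets_ball_u _ (.inr ⟨w, hw, rfl⟩)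
    · exact ⟨v, hG.dist_le_one_iff.2 hw', hG.dist_le_one_iff.2 hw⟩
  obtain ⟨z, hz⟩ := hHelly balls ⟨_, Set.mem_insert _ _⟩ hpair
  exact ⟨z, fun w hw => hG.dist_le_one_iff.1 (hz (w, 1) (.inr ⟨w, hw, rfl⟩)),
    hz _ (Set.mem_insert _ _)⟩

lemma isGraphCorner_of_ne_of_subset {V : Type*} {G : SimpleGraph V} {x y : V} (hxy : x ≠ y)
    (h : insert x (G.neighborSet x) ⊆ insert y (G.neighborSet y)) : IsGraphCorner G x := by
  obtain rfl | hyx := h (Set.mem_insert x _)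
  · exact absurd rfl hxy
  · exact ⟨y, G.adj_symm hyx, h⟩

theorem helly_has_corner_general {V : Type*} (G : SimpleGraph V)
    (hG : G.Connected) (hHelly : IsHellyGraph G)
    (d : ℕ) (hd : 1 ≤ d) (hdiam : ∀ a b : V, G.dist a b ≤ d)
    (u v : V) (huv : G.dist u v = d) :
    (∃ z, z ≠ v ∧ insert v (G.neighborSet v) ⊆ insert z (G.neighborSet z) ∧
      G.dist u z ≤ d - 1) ∧ ∃ x, IsGraphCorner G x := by
  obtain ⟨z, hsub, huz⟩ := hHelly.exists_closedNeighborhood_subset hG (u := u) (r := d - 1)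
    fun w _ => by have := hdiam u w; omega
  have hzv : z ≠ v := by
    rintro rfl
    omega
  exact ⟨⟨z, hzv, hsub, huz⟩, v, isGraphCorner_of_ne_of_subset hzv.symm hsub⟩

/-- if `G` is a finite connected Helly graph of diameter `d ≥ 1` and
`u, v` are vertices at distance `d`, then there is a vertex `z ≠ v` with
`N[v] ⊆ N[z]` and `d_G(u,z) ≤ d - 1`; in particular `G` has a corner. -/
theorem helly_has_corner {V : Type*} [Fintype V] (G : SimpleGraph V)
    (hG : G.Connected) (hHelly : IsHellyGraph G)
    (d : ℕ) (hd : 1 ≤ d) (hdiam : ∀ a b : V, G.dist a b ≤ d)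
    (u v : V) (huv : G.dist u v = d) :
    (∃ z, z ≠ v ∧ insert v (G.neighborSet v) ⊆ insert z (G.neighborSet z) ∧
      G.dist u z ≤ d - 1) ∧ ∃ x, IsGraphCorner G x :=
  helly_has_corner_general G hG hHelly d hd hdiam u v huv
end

section
/- If G is a finite connected Helly graph and x is a corner of G, then the induced subgraph G − x obtained by deleting x is again a finite connected Helly graph. -/
/-!
Let `y` be a neighbour of the corner `x` with `N[x] ⊆ N[y]`. Every vertex `u ≠ x` satisfies
`d(u, y) ≤ d(u, x)`, since the second vertex of a geodesic from `x` to `u` lies in `N[y]`. Hence a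
geodesic of `G` through `x` can be rerouted through `y`: the graph `G - x` is connected and
isometrically embedded in `G`. Given pairwise intersecting balls of `G - x`, the Helly property
of `G` yields a common point `w`, and if `w = x` then `y` is a common point as well.
-/

namespace SimpleGraph

variable {V : Type*} {G : SimpleGraph V}

section Induce

variable {S : Set V}
  (hstep : ∀ u ∈ S, ∀ v ∈ S, u ≠ v → ∃ a ∈ S, G.Adj u a ∧ G.dist a v < G.dist u v)
include hstep

lemma exists_induce_walk_length_le_dist (u v : S) :
    ∃ w : (G.induce S).Walk u v, w.length ≤ G.dist u.1 v.1 := by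
  induction h : G.dist u.1 v.1 using Nat.strong_induction_on generalizing u with
  | _ n ih =>
    by_cases huv : u = v
    · subst huv
      exact ⟨.nil, Nat.zero_le n⟩
    obtain ⟨a, haS, hua, hav⟩ := hstep u u.2 v v.2 (Subtype.coe_ne_coe.mpr huv)
    obtain ⟨w, hw⟩ := ih _ (h ▸ hav) ⟨a, haS⟩ rfl
    refine ⟨.cons (show (G.induce S).Adj u ⟨a, haS⟩ from hua) w, ?_⟩
    rw [Walk.length_cons, ← h]
    exact hw.trans_lt hav

lemma induce_dist_eq (u v : S) : (G.induce S).dist u v = G.dist u.1 v.1 := by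
  obtain ⟨w, hw⟩ := exists_induce_walk_length_le_dist hstep u v
  obtain ⟨p, hp⟩ := w.reachable.exists_walk_length_eq_dist
  refine le_antisymm ((dist_le w).trans hw) ?_
  calc G.dist u.1 v.1 ≤ (p.map (Embedding.induce S).toHom).length := dist_le _
    _ = (G.induce S).dist u v := by rw [Walk.length_map, hp]

lemma induce_connected [Nonempty S] : (G.induce S).Connected :=
  Connected.mk fun u v ↦
    let ⟨w, _⟩ := exists_induce_walk_length_le_dist hstep u v
    w.reachable

end Induce

section Dominated

variable {x y : V} (hdom : insert x (G.neighborSet x) ⊆ insert y (G.neighborSet y))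
include hdom

lemma dist_le_dist_of_closedNeighborSet_subset {u : V} (hu : u ≠ x) :
    G.dist u y ≤ G.dist u x := by
  rw [dist_comm, dist_comm (u := u)]
  by_cases hreach : G.Reachable x u
  · obtain ⟨w, hw⟩ := hreach.exists_walk_length_eq_dist
    cases w with
    | nil => exact absurd rfl hu
    | @cons _ a _ hxa q =>
      rw [Walk.length_cons] at hw
      rcases hdom (Or.inr hxa) with rfl | hya
      · exact (dist_le q).trans (by omega)
      · calc G.dist y u ≤ (Walk.cons (show G.Adj y a from hya) q).length := dist_le _
          _ = G.dist x u := by rw [Walk.length_cons, hw]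
  · have hyx : G.Reachable y x := by
      rcases hdom (Set.mem_insert x _) with h | h
      · exact h ▸ Reachable.rfl
      · exact h.reachable
    rw [dist_eq_zero_of_not_reachable fun h ↦ hreach (hyx.symm.trans h)]
    exact Nat.zero_le _

lemma exists_adj_ne_dist_lt_of_closedNeighborSet_subset (hxy : G.Adj x y) (hG : G.Connected)
    {u v : V} (hu : u ≠ x) (hv : v ≠ x) (huv : u ≠ v) :
    ∃ a ≠ x, G.Adj u a ∧ G.dist a v < G.dist u v := by
  obtain ⟨w, hw⟩ := hG.exists_walk_length_eq_dist u v
  cases w with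
  | nil => exact absurd rfl huv
  | @cons _ a _ hua q =>
    rw [Walk.length_cons] at hw
    have hav : G.dist a v < G.dist u v := (dist_le q).trans_lt (by omega)
    by_cases hax : a = x
    · subst hax
      have hyv : G.dist y v < G.dist u v :=
        calc G.dist y v = G.dist v y := dist_comm
          _ ≤ G.dist v a := dist_le_dist_of_closedNeighborSet_subset hdom hv
          _ = G.dist a v := dist_comm
          _ < G.dist u v := hav
      have huy : G.Adj u y := by
        rcases hdom (Or.inr hua.symm) with rfl | h
        · exact absurd hyv (lt_irrefl _)
        · exact h.symm
      exact ⟨y, hxy.ne', huy, hyv⟩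
    · exact ⟨a, hax, hua, hav⟩

end Dominated

end SimpleGraph

open SimpleGraph

lemma IsHellyGraph.induce {V : Type*} {G : SimpleGraph V} {S : Set V} (hG : IsHellyGraph G)
    (hdist : ∀ u v : S, (G.induce S).dist u v = G.dist u.1 v.1)
    (r : V → S) (hr : ∀ (u : S) (v : V), G.dist u (r v) ≤ G.dist u v) :
    IsHellyGraph (G.induce S) := by
  intro s hs hpair
  obtain ⟨w, hw⟩ := hG (Prod.map (↑) id '' s) (hs.image _) <| by
    rintro _ ⟨p, hp, rfl⟩ _ ⟨q, hq, rfl⟩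
    obtain ⟨w, hpw, hqw⟩ := hpair p hp q hq
    exact ⟨w, hdist p.1 w ▸ hpw, hdist q.1 w ▸ hqw⟩
  refine ⟨r w, fun p hp ↦ ?_⟩
  rw [hdist]
  exact (hr p.1 w).trans (hw _ ⟨p, hp, rfl⟩)

theorem helly_corner_deletion_general {V : Type*} (G : SimpleGraph V)
    (hG : G.Connected) (hHelly : IsHellyGraph G) (x : V) (hx : IsGraphCorner G x) :
    (G.induce {y | y ≠ x}).Connected ∧ IsHellyGraph (G.induce {y | y ≠ x}) := by
  classical
  obtain ⟨y, hxy, hdom⟩ := hx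
  have hstep : ∀ u ∈ {z | z ≠ x}, ∀ v ∈ {z | z ≠ x}, u ≠ v →
      ∃ a ∈ {z | z ≠ x}, G.Adj u a ∧ G.dist a v < G.dist u v :=
    fun _ hu _ hv huv ↦ exists_adj_ne_dist_lt_of_closedNeighborSet_subset hdom hxy hG hu hv huv
  have : Nonempty {z | z ≠ x} := ⟨⟨y, hxy.ne'⟩⟩
  refine ⟨induce_connected hstep, hHelly.induce (induce_dist_eq hstep)
    (fun v ↦ if hv : v = x then ⟨y, hxy.ne'⟩ else ⟨v, hv⟩) fun u v ↦ ?_⟩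
  split_ifs with hv
  · exact hv ▸ dist_le_dist_of_closedNeighborSet_subset hdom u.2
  · exact le_rfl

/-- deleting a corner from a finite connected Helly graph yields a
finite connected Helly graph. -/
theorem helly_corner_deletion {V : Type*} [Fintype V] (G : SimpleGraph V)
    (hG : G.Connected) (hHelly : IsHellyGraph G) (x : V) (hx : IsGraphCorner G x) :
    (G.induce {y | y ≠ x}).Connected ∧ IsHellyGraph (G.induce {y | y ≠ x}) :=
  helly_corner_deletion_general G hG hHelly x hx
end

section
/- Every finite connected Helly graph G is dismantlable: there is an ordering v_1, v_2, …, v_n of the vertices of G such that for each i < n, the vertex v_i is a corner of the subgraph of G induced by {v_i, v_{i+1}, …, v_n}. -/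
/-- If `dist u z ≠ 0`, then `z` has a neighbor strictly closer to `u`. -/
lemma helly_step_lemma {V : Type*} (G : SimpleGraph V) (hG : G.Connected) (u z : V)
    (h : G.dist u z ≠ 0) : ∃ w, G.Adj z w ∧ G.dist u w + 1 ≤ G.dist u z := by
  obtain ⟨p, hp⟩ := (hG z u).exists_walk_length_eq_dist
  cases p with
  | nil => exact absurd hp.symm h
  | @cons _ w _ h' q =>
      refine ⟨w, h', ?_⟩
      have h1 : G.dist u w ≤ q.length := by
        rw [SimpleGraph.dist_comm]; exact G.dist_le q
      have h2 : G.dist z u = q.length + 1 := by simpa using hp.symm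
      have h3 : G.dist u z = G.dist z u := SimpleGraph.dist_comm ..
      omega

/-- Main combinatorial step: in a Helly graph, a vertex `x ≠ u` of maximal distance
from `u` within `S` (where `S` contains all vertices closer to `u`) is dominated in
`S` by some vertex of `S`. -/
lemma helly_corner_lemma {V : Type*} (G : SimpleGraph V) (hG : G.Connected)
    (hHelly : IsHellyGraph G) (u x : V) (S : Set V) (hx : x ∈ S) (hxu : x ≠ u)
    (hSle : ∀ w ∈ S, G.dist u w ≤ G.dist u x)
    (hSlt : ∀ w, G.dist u w < G.dist u x → w ∈ S) :
    ∃ y ∈ S, G.Adj x y ∧ ∀ z ∈ S, (G.Adj x z ∨ z = x) → (G.Adj y z ∨ z = y) := by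
  set k := G.dist u x with hk
  have hk0 : k ≠ 0 := by
    rw [hk, Ne, hG.dist_eq_zero_iff]
    exact fun h => hxu h.symm
  have hN1 : ∀ z, (G.Adj x z ∨ z = x) → G.dist z x ≤ 1 := by
    rintro z (h | rfl)
    · exact le_of_eq (SimpleGraph.dist_eq_one_iff_adj.mpr h.symm)
    · rw [SimpleGraph.dist_self]; omega
  set s : Set (V × ℕ) :=
    insert (u, k-1) ((fun z => (z, 1)) '' {z ∈ S | G.Adj x z ∨ z = x}) with hs
  have hpair : ∀ p ∈ s, ∀ q ∈ s, ∃ w, G.dist p.1 w ≤ p.2 ∧ G.dist q.1 w ≤ q.2 := by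
    have hball : ∀ q ∈ s, ∃ w, G.dist u w ≤ k - 1 ∧ G.dist q.1 w ≤ q.2 := by
      rintro q hq
      rcases hq with rfl | ⟨z, ⟨hzS, _⟩, rfl⟩
      · exact ⟨u, by rw [SimpleGraph.dist_self]; omega, by rw [SimpleGraph.dist_self]; omega⟩
      · by_cases hz0 : G.dist u z = 0
        · have hzu : z = u := (hG.dist_eq_zero_iff.mp hz0).symm
          refine ⟨u, by rw [SimpleGraph.dist_self]; omega, ?_⟩
          simp only [hzu, SimpleGraph.dist_self]; omega
        · obtain ⟨w, hadj, hw⟩ := helly_step_lemma G hG u z hz0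
          have hzk : G.dist u z ≤ k := hSle z hzS
          exact ⟨w, by omega, le_of_eq (SimpleGraph.dist_eq_one_iff_adj.mpr hadj)⟩
    intro p hp q hq
    rcases hp with rfl | ⟨z, ⟨hzS, hzN⟩, rfl⟩
    · exact hball q hq
    · rcases hq with rfl | ⟨z', ⟨hzS', hzN'⟩, rfl⟩
      · obtain ⟨w, h1, h2⟩ := hball _ (Set.mem_insert_of_mem _ ⟨z, ⟨hzS, hzN⟩, rfl⟩)
        exact ⟨w, h2, h1⟩
      · exact ⟨x, hN1 z hzN, hN1 z' hzN'⟩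
  obtain ⟨y, hy⟩ := hHelly s ⟨_, Set.mem_insert _ _⟩ hpair
  have hyu : G.dist u y ≤ k - 1 := hy _ (Set.mem_insert _ _)
  have hyS : y ∈ S := hSlt y (by omega)
  have hyx : y ≠ x := by
    intro h; rw [h] at hyu; omega
  have hdom : ∀ z ∈ S, (G.Adj x z ∨ z = x) → (G.Adj y z ∨ z = y) := by
    intro z hzS hzN
    have h1 := hy (z, 1) (Set.mem_insert_of_mem _ ⟨z, ⟨hzS, hzN⟩, rfl⟩)
    simp only at h1
    interval_cases h : G.dist z y
    · right; exact ((hG z y).dist_eq_zero_iff.mp h)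
    · left; exact (SimpleGraph.dist_eq_one_iff_adj.mp h).symm
  have hxy : G.Adj x y := by
    rcases hdom x hx (Or.inr rfl) with h | h
    · exact h.symm
    · exact absurd h.symm hyx
  exact ⟨y, hyS, hxy, hdom⟩

/-- every finite connected Helly graph is dismantlable: there is an
ordering `v_1, …, v_n` of the vertices such that each `v_i` (for `i < n`) is a
corner of the subgraph induced by `{v_i, v_{i+1}, …, v_n}`. -/
theorem helly_dismantlable {V : Type*} [Fintype V] (G : SimpleGraph V)
    (hG : G.Connected) (hHelly : IsHellyGraph G) :
    ∃ e : Fin (Fintype.card V) ≃ V,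
      ∀ i : Fin (Fintype.card V), (i : ℕ) + 1 < Fintype.card V →
        IsGraphCorner (G.induce {w | ∃ j : Fin (Fintype.card V), i ≤ j ∧ e j = w})
          ⟨e i, ⟨i, le_rfl, rfl⟩⟩ := by
  classical
  have hne : Nonempty V := hG.nonempty
  obtain ⟨u⟩ := hne
  set n := Fintype.card V with hn
  set f0 : Fin n ≃ V := (Fintype.equivFin V).symm with hf0
  set key : Fin n → ℕ := fun j => G.dist u (f0 j) with hkey
  set e : Fin n ≃ V := (Fin.revPerm.trans (Tuple.sort key)).trans f0 with he
  have hmono : ∀ i j : Fin n, i ≤ j → G.dist u (e j) ≤ G.dist u (e i) := by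
    intro i j hij
    have := Tuple.monotone_sort key (Fin.rev_le_rev.mpr hij)
    simpa [he, hkey] using this
  refine ⟨e, ?_⟩
  intro i hi
  set S : Set V := {w | ∃ j : Fin n, i ≤ j ∧ e j = w} with hS
  have hxS : e i ∈ S := ⟨i, le_rfl, rfl⟩
  have hxu : e i ≠ u := by
    intro hxe
    have h1 : G.dist u (e ⟨n - 1, by omega⟩) ≤ G.dist u (e i) := by
      apply hmono
      exact Fin.mk_le_mk.mpr (by omega) |>.trans_eq rfl
    have h0 : G.dist u (e i) = 0 := by rw [hxe, SimpleGraph.dist_self]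
    have h2 : u = e ⟨n - 1, by omega⟩ := hG.dist_eq_zero_iff.mp (by omega)
    have h3 : e ⟨n - 1, by omega⟩ = e i := by rw [← h2, hxe]
    have h4 := e.injective h3
    have h5 : n - 1 = (i : ℕ) := congrArg Fin.val h4
    omega
  have hSle : ∀ w ∈ S, G.dist u w ≤ G.dist u (e i) := by
    rintro w ⟨j, hij, rfl⟩; exact hmono i j hij
  have hSlt : ∀ w, G.dist u w < G.dist u (e i) → w ∈ S := by
    intro w hw
    refine ⟨e.symm w, ?_, e.apply_symm_apply w⟩
    by_contra hlt
    push_neg at hlt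
    have := hmono (e.symm w) i hlt.le
    rw [e.apply_symm_apply] at this
    omega
  obtain ⟨y, hyS, hxy, hdom⟩ := helly_corner_lemma G hG hHelly u (e i) S hxS hxu hSle hSlt
  refine ⟨⟨y, hyS⟩, ?_, ?_⟩
  · exact hxy
  · rintro ⟨z, hzS⟩ hz
    simp only [Set.mem_insert_iff, SimpleGraph.mem_neighborSet, SimpleGraph.comap_adj,
      Function.Embedding.coe_subtype, Subtype.mk.injEq] at hz ⊢
    rcases hz with hz | hz
    · rcases hdom z hzS (Or.inr hz) with h | h
      · right; exact h
      · left; exact h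
    · rcases hdom z hzS (Or.inl hz) with h | h
      · right; exact h
      · left; exact h
end

section
/- Let G be a finite connected simple graph and let P be an isometric path in G. Then for every vertex v of G, the wide shadow S_P(v) is nonempty. -/
/-- `p : Fin n → V` is an isometric path in `G` if the distance in `G` between the
`i`-th and `j`-th vertices equals `|i - j|`. -/
def IsIsometricPath {V : Type*} (G : SimpleGraph V) {n : ℕ} (p : Fin n → V) : Prop :=
  ∀ i j : Fin n, G.dist (p i) (p j) = ((i : ℤ) - (j : ℤ)).natAbs

/-- The wide shadow `S_P(v)` of a vertex `v` on the path `p`: all vertices `y` of `p`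
with `d_G(y,x) ≤ d_G(v,x)` for every vertex `x` of `p`. -/
def pathWideShadow {V : Type*} (G : SimpleGraph V) {n : ℕ} (p : Fin n → V) (v : V) :
    Set V :=
  {y | (∃ a, p a = y) ∧ ∀ b : Fin n, G.dist y (p b) ≤ G.dist v (p b)}

/-- if `P` is an isometric path in a finite connected graph `G`, then
the wide shadow `S_P(v)` of every vertex `v` of `G` is nonempty. -/
theorem pathWideShadow_nonempty {V : Type*} [Fintype V] (G : SimpleGraph V)
    (hG : G.Connected) (n : ℕ) (p : Fin (n + 1) → V) (hp : IsIsometricPath G p)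
    (v : V) : (pathWideShadow G p v).Nonempty := by
  classical
  set f : Fin (n+1) → ℤ := fun b => (G.dist v (p b) : ℤ) with hf
  have hf0 : ∀ b, 0 ≤ f b := fun b => Int.natCast_nonneg _
  have htri : ∀ b b' : Fin (n+1), |(b:ℤ) - (b':ℤ)| ≤ f b + f b' := by
    intro b b'
    have h1 : G.dist (p b) (p b') ≤ G.dist (p b) v + G.dist v (p b') :=
      hG.dist_triangle
    have h2 := hp b b'
    have h3 : (G.dist (p b) (p b') : ℤ) = |(b:ℤ) - (b':ℤ)| := by
      rw [h2]; exact (Int.abs_eq_natAbs _).symm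
    have h4 : G.dist (p b) v = G.dist v (p b) := G.dist_comm ..
    simp only [hf]
    omega
  obtain ⟨b₀, -, hb₀⟩ := Finset.exists_max_image Finset.univ
    (fun b : Fin (n+1) => (b:ℤ) - f b) ⟨0, Finset.mem_univ 0⟩
  set k : ℤ := max 0 ((b₀:ℤ) - f b₀) with hk
  have hk0 : 0 ≤ k := le_max_left _ _
  have hkn : k ≤ n := by
    have : (b₀:ℤ) ≤ n := by exact_mod_cast Nat.lt_succ_iff.mp b₀.isLt
    have := hf0 b₀
    omega
  have hlt : k.toNat < n + 1 := by omega
  refine ⟨p ⟨k.toNat, hlt⟩, ⟨⟨_, rfl⟩, ?_⟩⟩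
  intro b
  have ha : ((⟨k.toNat, hlt⟩ : Fin (n+1)) : ℤ) = k := by
    simp [Int.toNat_of_nonneg hk0]
  have h2 := hp ⟨k.toNat, hlt⟩ b
  rw [ha] at h2
  have hlo : (b:ℤ) - f b ≤ k := le_trans (hb₀ b (Finset.mem_univ b)) (le_max_right _ _)
  have hhi : k ≤ (b:ℤ) + f b := by
    have h5 := htri b₀ b
    have := hf0 b
    have := abs_le.mp h5
    omega
  have habs : |k - (b:ℤ)| ≤ f b := abs_le.mpr ⟨by omega, by omega⟩
  have : ((k - (b:ℤ)).natAbs : ℤ) ≤ f b := by rwa [← Int.abs_eq_natAbs]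
  simp only [hf] at this
  omega
end

section
/- Let G be a finite connected simple graph, let P = v_1v_2⋯v_k be an isometric path in G, and let v be a vertex of G. Then the wide shadow S_P(v) consists of consecutive vertices of P: if v_a ∈ S_P(v) and v_b ∈ S_P(v) with a ≤ c ≤ b, then v_c ∈ S_P(v). -/
/-- the wide shadow of a vertex on an isometric path consists of
consecutive vertices of the path. -/
theorem pathWideShadow_consecutive {V : Type*} [Fintype V] (G : SimpleGraph V)
    (hG : G.Connected) (n : ℕ) (p : Fin n → V) (hp : IsIsometricPath G p)
    (v : V) (a b c : Fin n) (ha : p a ∈ pathWideShadow G p v)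
    (hb : p b ∈ pathWideShadow G p v) (hac : a ≤ c) (hcb : c ≤ b) :
    p c ∈ pathWideShadow G p v := by
  have hac' : (a : ℕ) ≤ (c : ℕ) := hac
  have hcb' : (c : ℕ) ≤ (b : ℕ) := hcb
  refine ⟨⟨c, rfl⟩, fun j => ?_⟩
  rcases le_or_gt (j : ℕ) (c : ℕ) with h | h
  · calc G.dist (p c) (p j) = ((c:ℤ)-(j:ℤ)).natAbs := hp c j
      _ ≤ ((b:ℤ)-(j:ℤ)).natAbs := by omega
      _ = G.dist (p b) (p j) := (hp b j).symm
      _ ≤ G.dist v (p j) := hb.2 j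
  · calc G.dist (p c) (p j) = ((c:ℤ)-(j:ℤ)).natAbs := hp c j
      _ ≤ ((a:ℤ)-(j:ℤ)).natAbs := by omega
      _ = G.dist (p a) (p j) := (hp a j).symm
      _ ≤ G.dist v (p j) := ha.2 j
end

section
/- Let G be a finite connected simple graph, let P be an isometric path in G, and let B be a bypath of P in G. Then for every vertex v of B, the wide shadow S_P(v) consists of exactly one vertex of P. -/
/-- The path obtained from `p` by replacing its segment between indices `i` and `j`
with the path `b`. -/
def replaceSeg {V : Type*} {k t : ℕ} (p : Fin k → V) (b : Fin t → V) (i j : Fin k) :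
    Fin ((i : ℕ) + t + (k - 1 - (j : ℕ))) → V := fun m =>
  if h1 : (m : ℕ) < (i : ℕ) then p ⟨m, lt_trans h1 i.isLt⟩
  else if h2 : (m : ℕ) < (i : ℕ) + t then b ⟨(m : ℕ) - (i : ℕ), by omega⟩
  else p ⟨(m : ℕ) - ((i : ℕ) + t) + (j : ℕ) + 1, by
    have hm := m.isLt; have hj := j.isLt; omega⟩

/-- `b` (a path on `t + 3 ≥ 3` vertices) is a bypath of the isometric path `p` with
branching vertices `p i` and `p j`: `b` is a path from `p i` to `p j` meeting `p`
only in those two vertices, and replacing the segment of `p` from `i` to `j` by `b`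
again yields an isometric path in `G`. -/
def IsBypathAt {V : Type*} (G : SimpleGraph V) {k t : ℕ} (p : Fin k → V)
    (b : Fin (t + 3) → V) (i j : Fin k) : Prop :=
  i < j ∧ Function.Injective b ∧
  (∀ m : Fin (t + 2), G.Adj (b m.castSucc) (b m.succ)) ∧
  b 0 = p i ∧ b (Fin.last (t + 2)) = p j ∧
  Set.range b ∩ Set.range p = {p i, p j} ∧
  IsIsometricPath G (replaceSeg p b i j)

/-- `p` is bypath-free in `G` if `G` contains no bypath of `p`. -/
def BypathFree {V : Type*} (G : SimpleGraph V) {k : ℕ} (p : Fin k → V) : Prop :=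
  ∀ (t : ℕ) (b : Fin (t + 3) → V) (i j : Fin k), ¬ IsBypathAt G p b i j

/-- if `B` is a bypath of an isometric path `P` in `G`, then the wide
shadow on `P` of every vertex of `B` consists of exactly one vertex of `P`. -/
theorem bypath_wideShadow_unique {V : Type*} [Fintype V] (G : SimpleGraph V)
    (hG : G.Connected) {k t : ℕ} (p : Fin k → V) (hp : IsIsometricPath G p)
    (b : Fin (t + 3) → V) (i j : Fin k) (hb : IsBypathAt G p b i j)
    (m : Fin (t + 3)) : ∃! y, y ∈ pathWideShadow G p (b m) := by
  obtain ⟨hij, hinj, hadj, hb0, hblast, hrange, hq⟩ := hb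
  have hik : (i:ℕ) < k := i.isLt
  have hjk : (j:ℕ) < k := j.isLt
  have hijn : (i:ℕ) < (j:ℕ) := hij
  have hm2 : (m:ℕ) < t + 3 := m.isLt
  -- evaluations of the replaced path
  have hQb : ∀ (s : Fin (t+3)),
      replaceSeg p b i j ⟨(i:ℕ) + s, by omega⟩ = b s := by
    intro s
    simp only [replaceSeg]
    rw [dif_neg (by omega), dif_pos (by omega)]
    congr 1
    apply Fin.ext
    simp
  have hQlow : ∀ (a : Fin k), (a:ℕ) ≤ i →
      ∃ h : (a:ℕ) < (i : ℕ) + (t+3) + (k - 1 - (j : ℕ)),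
        replaceSeg p b i j ⟨a, h⟩ = p a := by
    intro a ha
    refine ⟨by omega, ?_⟩
    rcases lt_or_eq_of_le ha with h | h
    · simp only [replaceSeg]
      rw [dif_pos (by simpa using h)]
    · simp only [replaceSeg]
      rw [dif_neg (by omega), dif_pos (by omega)]
      have hb0' : b ⟨(a:ℕ) - i, by omega⟩ = b 0 := by
        congr 1; apply Fin.ext; simp; omega
      rw [hb0', hb0]
      congr 1; apply Fin.ext; omega
  have hQhigh : ∀ (a : Fin k), (j:ℕ) ≤ a →
      ∃ h : (i:ℕ) + t + 2 + ((a:ℕ) - j) < (i : ℕ) + (t+3) + (k - 1 - (j : ℕ)),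
        replaceSeg p b i j ⟨(i:ℕ) + t + 2 + ((a:ℕ) - j), h⟩ = p a := by
    intro a ha
    refine ⟨by omega, ?_⟩
    rcases lt_or_eq_of_le ha with h | h
    · simp only [replaceSeg]
      rw [dif_neg (by omega), dif_neg (by omega)]
      congr 1; apply Fin.ext; simp; omega
    · simp only [replaceSeg]
      rw [dif_neg (by omega), dif_pos (by omega)]
      have hbl : b ⟨(i:ℕ) + t + 2 + ((a:ℕ) - j) - i, by omega⟩ = b (Fin.last (t+2)) := by
        congr 1; apply Fin.ext; simp [Fin.last]; omega
      rw [hbl, hblast]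
      congr 1; apply Fin.ext; omega
  -- distances from b s
  have hdlow : ∀ (s : Fin (t+3)) (a : Fin k), (a:ℕ) ≤ i →
      G.dist (b s) (p a) = (i:ℕ) + s - a := by
    intro s a ha
    obtain ⟨h, hQ⟩ := hQlow a ha
    have hd := hq ⟨(i:ℕ)+s, by omega⟩ ⟨a, h⟩
    rw [hQb s, hQ] at hd
    rw [hd]; simp; omega
  have hdmi : G.dist (b m) (p i) = (m:ℕ) := by
    rw [hdlow m i le_rfl]; omega
  -- j = i + t + 2
  have hj2 : (j:ℕ) = (i:ℕ) + t + 2 := by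
    obtain ⟨h, hQ⟩ := hQlow i le_rfl
    have hd := hq ⟨(i:ℕ) + ((Fin.last (t+2) : Fin (t+3)) : ℕ), by omega⟩ ⟨(i:ℕ), h⟩
    rw [hQ, hQb (Fin.last (t+2)), hblast] at hd
    rw [hp j i] at hd
    simp at hd
    omega
  have hdhigh : ∀ (s : Fin (t+3)) (a : Fin k), (j:ℕ) ≤ a →
      G.dist (b s) (p a) = (a:ℕ) - ((i:ℕ) + s) := by
    intro s a ha
    obtain ⟨h, hQ⟩ := hQhigh a ha
    have hs2 : (s:ℕ) < t + 3 := s.isLt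
    have hd := hq ⟨(i:ℕ)+s, by omega⟩ ⟨(i:ℕ) + t + 2 + ((a:ℕ) - j), h⟩
    rw [hQb s, hQ] at hd
    rw [hd]; simp; omega
  have hdmj : G.dist (b m) (p j) = t + 2 - (m:ℕ) := by
    rw [hdhigh m j le_rfl]; omega
  -- the candidate vertex
  set c : Fin k := ⟨(i:ℕ) + m, by omega⟩ with hc
  have hcv : (c:ℕ) = (i:ℕ) + m := rfl
  refine ⟨p c, ⟨⟨c, rfl⟩, ?_⟩, ?_⟩
  · intro a
    rw [hp c a]
    rcases le_or_gt (a:ℕ) (i:ℕ) with ha | ha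
    · rw [hdlow m a ha]; simp [hcv]; omega
    rcases le_or_gt (j:ℕ) (a:ℕ) with ha' | ha'
    · rw [hdhigh m a ha']; simp [hcv]; omega
    · have h1 := hG.dist_triangle (u := b m) (v := p a) (w := p i)
      have h2 := hG.dist_triangle (u := b m) (v := p a) (w := p j)
      rw [hdmi, hp a i] at h1
      rw [hdmj, hp a j] at h2
      simp only [hcv] at *
      omega
  · rintro y ⟨⟨a, rfl⟩, hy⟩
    have h1 := hy i
    have h2 := hy j
    rw [hp a i, hdmi] at h1
    rw [hp a j, hdmj] at h2
    have : a = c := by apply Fin.ext; simp [hcv] at *; omega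
    rw [this]
end

section
/- Let G be a finite connected simple graph, let P be a non-trivial isometric path in G, and let v be a vertex of G not on P. If the wide shadow S_P(v) consists of exactly one vertex, then there exists a bypath B of P in G with v ∈ V(B). -/
private lemma aux_iso {V : Type*} {G : SimpleGraph V} (hG : G.Connected) {k t : ℕ}
    (p : Fin k → V) (hp : IsIsometricPath G p) (i j : Fin k) (b : Fin (t + 3) → V)
    (hij : (i : ℕ) + (t + 2) = (j : ℕ))
    (hb0 : b 0 = p i) (hbl : b (Fin.last (t + 2)) = p j)
    (hbd : ∀ r r' : Fin (t + 3), (r : ℕ) ≤ (r' : ℕ) →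
      G.dist (b r) (b r') = (r' : ℕ) - (r : ℕ)) :
    IsIsometricPath G (replaceSeg p b i j) := by
  have hjk := j.isLt
  have hdist_nat : ∀ a c : Fin k, (a : ℕ) ≤ c → G.dist (p a) (p c) = (c : ℕ) - (a : ℕ) := by
    intro a c h
    rw [hp a c]
    omega
  set q : Fin ((i : ℕ) + (t + 3) + (k - 1 - (j : ℕ))) → V := replaceSeg p b i j with hqdef
  have hqB : ∀ (γ : Fin ((i : ℕ) + (t + 3) + (k - 1 - (j : ℕ))))
      (h1 : (i : ℕ) ≤ (γ : ℕ)) (h2 : (γ : ℕ) ≤ (j : ℕ)),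
      q γ = b ⟨(γ : ℕ) - (i : ℕ), by omega⟩ := by
    intro γ h1 h2
    rw [hqdef]
    show (if h1 : (γ : ℕ) < (i : ℕ) then _
      else if h2 : (γ : ℕ) < (i : ℕ) + (t + 3) then _ else _) = _
    rw [dif_neg (by omega), dif_pos (by omega)]
  have hqP : ∀ (γ : Fin ((i : ℕ) + (t + 3) + (k - 1 - (j : ℕ)))) (hγk : (γ : ℕ) < k),
      (γ : ℕ) ≤ (i : ℕ) ∨ (j : ℕ) ≤ (γ : ℕ) → q γ = p ⟨(γ : ℕ), hγk⟩ := by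
    intro γ hγk hor
    rcases lt_or_ge (γ : ℕ) (i : ℕ) with h | h
    · rw [hqdef]
      show (if h1 : (γ : ℕ) < (i : ℕ) then _ else _) = _
      rw [dif_pos h]
    · rcases hor with h' | h'
      · have hγ : (γ : ℕ) = (i : ℕ) := le_antisymm h' h
        rw [hqB γ h (by omega)]
        have : (⟨(γ : ℕ) - (i : ℕ), by omega⟩ : Fin (t + 3)) = 0 := by
          refine Fin.ext ?_
          simp only [Fin.val_mk, Fin.val_zero]
          omega
        rw [this, hb0]
        congr 1
        exact Fin.ext hγ.symm
      · rcases eq_or_lt_of_le h' with h'' | h''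
        · rw [hqB γ (by omega) (by omega)]
          have : (⟨(γ : ℕ) - (i : ℕ), by omega⟩ : Fin (t + 3)) = Fin.last (t + 2) := by
            refine Fin.ext ?_
            simp only [Fin.val_mk, Fin.val_last]
            omega
          rw [this, hbl]
          congr 1
          exact Fin.ext h''
        · rw [hqdef]
          show (if h1 : (γ : ℕ) < (i : ℕ) then _
            else if h2 : (γ : ℕ) < (i : ℕ) + (t + 3) then _ else _) = _
          rw [dif_neg (by omega), dif_neg (by omega)]
          congr 1
          exact Fin.ext (by simp only [Fin.val_mk]; omega)
  have key : ∀ α β : Fin ((i : ℕ) + (t + 3) + (k - 1 - (j : ℕ))), (α : ℕ) ≤ (β : ℕ) →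
      G.dist (q α) (q β) = (β : ℕ) - (α : ℕ) := by
    intro α β hab
    have hαk : (α : ℕ) < k := by have := α.isLt; omega
    have hβk : (β : ℕ) < k := by have := β.isLt; omega
    by_cases h1 : (β : ℕ) ≤ (i : ℕ)
    · rw [hqP α hαk (Or.inl (by omega)), hqP β hβk (Or.inl h1)]
      exact hdist_nat _ _ hab
    by_cases h2 : (j : ℕ) ≤ (α : ℕ)
    · rw [hqP α hαk (Or.inr h2), hqP β hβk (Or.inr (by omega))]
      exact hdist_nat _ _ hab
    by_cases h3 : (α : ℕ) ≤ (i : ℕ) ∧ (j : ℕ) ≤ (β : ℕ)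
    · rw [hqP α hαk (Or.inl h3.1), hqP β hβk (Or.inr h3.2)]
      exact hdist_nat _ _ hab
    by_cases h4 : (α : ℕ) ≤ (i : ℕ)
    · -- α left of segment, i < β < j
      have hβj : (β : ℕ) < (j : ℕ) := by omega
      rw [hqP α hαk (Or.inl h4), hqB β (by omega) (by omega)]
      set rβ : Fin (t + 3) := ⟨(β : ℕ) - (i : ℕ), by omega⟩ with hrβ
      have hrβv : (rβ : ℕ) = (β : ℕ) - (i : ℕ) := rfl
      have e2 : G.dist (p i) (b rβ) = (β : ℕ) - (i : ℕ) := by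
        rw [← hb0]
        have := hbd 0 rβ (by simp)
        simp only [Fin.val_zero] at this
        omega
      have e3 : G.dist (b rβ) (p j) = (j : ℕ) - (β : ℕ) := by
        rw [← hbl]
        have := hbd rβ (Fin.last (t + 2)) (by simp only [Fin.val_last, hrβv]; omega)
        simp only [Fin.val_last, hrβv] at this
        omega
      have e1 : G.dist (p ⟨(α : ℕ), hαk⟩) (p i) = (i : ℕ) - (α : ℕ) :=
        hdist_nat _ _ (by simp only [Fin.val_mk]; omega)
      have e4 : G.dist (p ⟨(α : ℕ), hαk⟩) (p j) = (j : ℕ) - (α : ℕ) :=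
        hdist_nat _ _ (by simp only [Fin.val_mk]; omega)
      have t1 := hG.dist_triangle (u := p ⟨(α : ℕ), hαk⟩) (v := p i) (w := b rβ)
      have t2 := hG.dist_triangle (u := p ⟨(α : ℕ), hαk⟩) (v := b rβ) (w := p j)
      omega
    by_cases h5 : (j : ℕ) ≤ (β : ℕ)
    · have hαi : (i : ℕ) < (α : ℕ) := by omega
      rw [hqB α (by omega) (by omega), hqP β hβk (Or.inr h5)]
      set rα : Fin (t + 3) := ⟨(α : ℕ) - (i : ℕ), by omega⟩ with hrα
      have hrαv : (rα : ℕ) = (α : ℕ) - (i : ℕ) := rfl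
      have e1 : G.dist (p i) (b rα) = (α : ℕ) - (i : ℕ) := by
        rw [← hb0]
        have := hbd 0 rα (by simp)
        simp only [Fin.val_zero] at this
        omega
      have e3 : G.dist (b rα) (p j) = (j : ℕ) - (α : ℕ) := by
        rw [← hbl]
        have := hbd rα (Fin.last (t + 2)) (by simp only [Fin.val_last, hrαv]; omega)
        simp only [Fin.val_last, hrαv] at this
        omega
      have e4 : G.dist (p j) (p ⟨(β : ℕ), hβk⟩) = (β : ℕ) - (j : ℕ) :=
        hdist_nat _ _ (by simp only [Fin.val_mk]; omega)
      have e5 : G.dist (p i) (p ⟨(β : ℕ), hβk⟩) = (β : ℕ) - (i : ℕ) :=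
        hdist_nat _ _ (by simp only [Fin.val_mk]; omega)
      have t1 := hG.dist_triangle (u := b rα) (v := p j) (w := p ⟨(β : ℕ), hβk⟩)
      have t2 := hG.dist_triangle (u := p i) (v := b rα) (w := p ⟨(β : ℕ), hβk⟩)
      omega
    · rw [hqB α (by omega) (by omega), hqB β (by omega) (by omega)]
      have := hbd ⟨(α : ℕ) - (i : ℕ), by omega⟩ ⟨(β : ℕ) - (i : ℕ), by omega⟩
        (by simp only [Fin.val_mk]; omega)
      simp only [Fin.val_mk] at this
      omega
  intro α β
  rcases le_total (α : ℕ) (β : ℕ) with h | h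
  · rw [key α β h]; omega
  · rw [SimpleGraph.dist_comm, key β α h]; omega

private lemma aux_dist_getVert_le {V : Type*} {G : SimpleGraph V} (hG : G.Connected) {u w : V}
    (W : G.Walk u w) {s r : ℕ} (hsr : s ≤ r) (hr : r ≤ W.length) :
    G.dist (W.getVert s) (W.getVert r) ≤ r - s := by
  induction r, hsr using Nat.le_induction with
  | base => simp [SimpleGraph.dist_self]
  | succ n hn ih =>
    have h1 : n < W.length := by omega
    have hadj := W.adj_getVert_succ h1
    have hd1 : G.dist (W.getVert n) (W.getVert (n+1)) ≤ 1 := by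
      simpa using SimpleGraph.dist_le hadj.toWalk
    have ht := hG.dist_triangle (u := W.getVert s) (v := W.getVert n) (w := W.getVert (n+1))
    have := ih (by omega)
    omega

private lemma aux_geo {V : Type*} {G : SimpleGraph V} (hG : G.Connected) {u w : V}
    (W : G.Walk u w) (hW : W.length = G.dist u w) {s r : ℕ} (hsr : s ≤ r)
    (hr : r ≤ W.length) :
    G.dist (W.getVert s) (W.getVert r) = r - s := by
  have h1 := aux_dist_getVert_le hG W hsr hr
  have h2 := aux_dist_getVert_le hG W (Nat.zero_le s) (le_trans hsr hr)
  have h3 := aux_dist_getVert_le hG W hr (le_refl W.length)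
  rw [W.getVert_zero] at h2
  rw [W.getVert_length] at h3
  have t1 := hG.dist_triangle (u := u) (v := W.getVert s) (w := W.getVert r)
  have t2 := hG.dist_triangle (u := u) (v := W.getVert r) (w := w)
  omega

/-- if `P` is a non-trivial isometric path in `G` (at least 3 vertices),
`v` is a vertex not on `P`, and the wide shadow `S_P(v)` has exactly one element,
then some bypath of `P` in `G` passes through `v`. -/
theorem unique_wideShadow_of_bypath {V : Type*} [Fintype V] (G : SimpleGraph V)
    (hG : G.Connected) {k : ℕ} (p : Fin k → V) (hp : IsIsometricPath G p)
    (hk : 3 ≤ k) (v : V) (hv : v ∉ Set.range p)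
    (hsh : ∃! y, y ∈ pathWideShadow G p v) :
    ∃ (t : ℕ) (b : Fin (t + 3) → V) (i j : Fin k),
      IsBypathAt G p b i j ∧ v ∈ Set.range b := by
  classical
  obtain ⟨y, hy, hyuniq⟩ := hsh
  obtain ⟨m, rfl⟩ := hy.1
  -- p is injective
  have hpinj : Function.Injective p := by
    intro a c hac
    have h := hp a c
    rw [hac, SimpleGraph.dist_self] at h
    exact Fin.ext (by omega)
  have hdist_nat : ∀ a c : Fin k, (a : ℕ) ≤ c → G.dist (p a) (p c) = (c : ℕ) - (a : ℕ) := by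
    intro a c h
    rw [hp a c]
    omega
  have hvne : ∀ b : Fin k, 1 ≤ G.dist v (p b) := fun b =>
    hG.pos_dist_of_ne (fun h => hv ⟨b, h.symm⟩)
  have hs : ∀ b : Fin k, ((m : ℤ) - (b : ℤ)).natAbs ≤ G.dist v (p b) := by
    intro b
    have := hy.2 b
    rwa [hp m b] at this
  have huniq' : ∀ a : Fin k, (∀ b : Fin k, ((a : ℤ) - (b : ℤ)).natAbs ≤ G.dist v (p b)) →
      a = m := by
    intro a ha
    refine hpinj (hyuniq (p a) ⟨⟨a, rfl⟩, ?_⟩)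
    intro b
    rw [hp a b]
    exact ha b
  -- m is interior
  have hm1 : 1 ≤ (m : ℕ) := by
    by_contra hcon
    have hm0 : (m : ℕ) = 0 := by omega
    have h1 : (⟨1, by omega⟩ : Fin k) = m := by
      refine huniq' _ (fun b => ?_)
      have h2 := hs b
      have h3 := hvne b
      have h4 := b.isLt
      simp only [Fin.val_mk] at *
      omega
    have := congrArg Fin.val h1
    simp only [Fin.val_mk] at this
    omega
  have hm2 : (m : ℕ) ≤ k - 2 := by
    by_contra hcon
    have hm0 : (m : ℕ) = k - 1 := by have := m.isLt; omega
    have h1 : (⟨k - 2, by omega⟩ : Fin k) = m := by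
      refine huniq' _ (fun b => ?_)
      have h2 := hs b
      have h3 := hvne b
      have h4 := b.isLt
      simp only [Fin.val_mk] at *
      omega
    have := congrArg Fin.val h1
    simp only [Fin.val_mk] at this
    omega
  -- extract b1 < m with dist v (p b1) = m - b1
  have hnb1 : ¬ (⟨(m : ℕ) + 1, by omega⟩ : Fin k) = m := by
    intro h
    have := congrArg Fin.val h
    simp only [Fin.val_mk] at this
    omega
  obtain ⟨b1, hb1⟩ : ∃ c : Fin k, G.dist v (p c) < (((m : ℕ) : ℤ) + 1 - (c : ℤ)).natAbs := by
    by_contra hcon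
    push_neg at hcon
    exact hnb1 (huniq' _ (fun b => by have := hcon b; simp only [Fin.val_mk] at *; omega))
  have hb1m : (b1 : ℕ) < (m : ℕ) ∧ G.dist v (p b1) = (m : ℕ) - (b1 : ℕ) := by
    have h2 := hs b1
    have h3 := hvne b1
    omega
  have hnb2 : ¬ (⟨(m : ℕ) - 1, by omega⟩ : Fin k) = m := by
    intro h
    have := congrArg Fin.val h
    simp only [Fin.val_mk] at this
    omega
  obtain ⟨b2, hb2⟩ : ∃ c : Fin k, G.dist v (p c) < (((m : ℕ) : ℤ) - 1 - (c : ℤ)).natAbs := by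
    by_contra hcon
    push_neg at hcon
    exact hnb2 (huniq' _ (fun b => by have := hcon b; simp only [Fin.val_mk] at *; omega))
  have hb2m : (m : ℕ) < (b2 : ℕ) ∧ G.dist v (p b2) = (b2 : ℕ) - (m : ℕ) := by
    have h2 := hs b2
    have h3 := hvne b2
    omega
  -- the geodesic walk through v
  obtain ⟨W1, hW1⟩ := hG.exists_walk_length_eq_dist (p b1) v
  obtain ⟨W2, hW2⟩ := hG.exists_walk_length_eq_dist v (p b2)
  set W : G.Walk (p b1) (p b2) := W1.append W2 with hWdef
  set L : ℕ := (b2 : ℕ) - (b1 : ℕ) with hLdef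
  set mv : ℕ := (m : ℕ) - (b1 : ℕ) with hmvdef
  have hW1len : W1.length = mv := by
    rw [hW1, SimpleGraph.dist_comm, hb1m.2]
  have hW2len : W2.length = (b2 : ℕ) - (m : ℕ) := by rw [hW2, hb2m.2]
  have hL : W.length = L := by
    rw [hWdef, SimpleGraph.Walk.length_append, hW1len, hW2len]
    omega
  have hWd : W.length = G.dist (p b1) (p b2) := by
    rw [hL, hdist_nat b1 b2 (by omega)]
  have hmv1 : 0 < mv := by omega
  have hmvL : mv < L := by omega
  have hWv : W.getVert mv = v := by
    rw [hWdef, SimpleGraph.Walk.getVert_append]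
    rw [hW1len]
    simp
  have geo : ∀ s r : ℕ, s ≤ r → r ≤ L → G.dist (W.getVert s) (W.getVert r) = r - s := by
    intro s r h1 h2
    exact aux_geo hG W hWd h1 (by omega)
  have hg0 : W.getVert 0 = p b1 := W.getVert_zero
  have hgL : W.getVert L = p b2 := by rw [← hL]; exact W.getVert_length
  -- index identification
  have idx : ∀ s : ℕ, s ≤ L → ∀ a : Fin k, W.getVert s = p a → (a : ℕ) = (b1 : ℕ) + s := by
    intro s hsL a hsa
    have h1 : G.dist (p b1) (p a) = s := by
      have := geo 0 s (Nat.zero_le s) hsL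
      rw [hg0, hsa] at this
      omega
    have h2 : G.dist (p a) (p b2) = L - s := by
      have := geo s L hsL le_rfl
      rw [hsa, hgL] at this
      exact this
    rw [hp] at h1 h2
    omega
  -- find the trimming positions s1 s2
  set Q : ℕ → Prop := fun s => W.getVert s ∈ Set.range p with hQdef
  have hQ0 : Q 0 := ⟨b1, hg0.symm⟩
  have hQL : Q L := ⟨b2, hgL.symm⟩
  have hQmv : ¬ Q mv := by rw [hQdef]; simpa [hWv] using hv
  set s1 : ℕ := Nat.findGreatest Q mv with hs1def
  have hs1Q : Q s1 := Nat.findGreatest_spec (Nat.zero_le mv) hQ0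
  have hs1le : s1 ≤ mv := Nat.findGreatest_le mv
  have hs1lt : s1 < mv := lt_of_le_of_ne hs1le (fun h => hQmv (h ▸ hs1Q))
  have hs1max : ∀ s : ℕ, s1 < s → s ≤ mv → ¬ Q s := fun s h1 h2 =>
    Nat.findGreatest_is_greatest h1 h2
  have hex : ∃ r : ℕ, Q (mv + 1 + r) := by
    refine ⟨L - mv - 1, ?_⟩
    have : mv + 1 + (L - mv - 1) = L := by omega
    rw [this]; exact hQL
  set s2 : ℕ := mv + 1 + Nat.find hex with hs2def
  have hs2Q : Q s2 := Nat.find_spec hex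
  have hs2le : s2 ≤ L := by
    have := Nat.find_min' hex (m := L - mv - 1) (by
      have : mv + 1 + (L - mv - 1) = L := by omega
      rw [this]; exact hQL)
    omega
  have hs2min : ∀ s : ℕ, mv < s → s < s2 → ¬ Q s := by
    intro s h1 h2 hQs
    refine Nat.find_min hex (m := s - mv - 1) (by omega) ?_
    have : mv + 1 + (s - mv - 1) = s := by omega
    rw [this]; exact hQs
  have hmvs2 : mv < s2 := by omega
  -- the branching vertices
  have hkb2 := b2.isLt
  have hb1mn := hb1m.1
  have hb2mn := hb2m.1
  set i' : Fin k := ⟨(b1 : ℕ) + s1, by omega⟩ with hi'def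
  set j' : Fin k := ⟨(b1 : ℕ) + s2, by omega⟩ with hj'def
  have hi'v : (i' : ℕ) = (b1 : ℕ) + s1 := rfl
  have hj'v : (j' : ℕ) = (b1 : ℕ) + s2 := rfl
  have hgi : W.getVert s1 = p i' := by
    obtain ⟨a, ha⟩ := hs1Q
    have hA := idx s1 (by omega) a ha.symm
    rw [← ha]
    congr 1
    exact Fin.ext (by omega)
  have hgj : W.getVert s2 = p j' := by
    obtain ⟨a, ha⟩ := hs2Q
    have hA := idx s2 (by omega) a ha.symm
    rw [← ha]
    congr 1
    exact Fin.ext (by omega)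
  have hts : s1 + 2 ≤ s2 := by omega
  refine ⟨s2 - s1 - 2, fun r => W.getVert (s1 + (r : ℕ)), i', j', ⟨?_, ?_, ?_, ?_, ?_, ?_, ?_⟩, ?_⟩
  · -- i' < j'
    rw [Fin.lt_def, hi'v, hj'v]
    omega
  · -- injective
    have key : ∀ r r' : Fin (s2 - s1 - 2 + 3), (r : ℕ) < (r' : ℕ) →
        W.getVert (s1 + (r : ℕ)) ≠ W.getVert (s1 + (r' : ℕ)) := by
      intro r r' h hEq
      have hr' := r'.isLt
      have := geo (s1 + (r : ℕ)) (s1 + (r' : ℕ)) (by omega) (by omega)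
      rw [hEq, SimpleGraph.dist_self] at this
      omega
    intro r r' h
    rcases lt_trichotomy (r : ℕ) (r' : ℕ) with hlt | heq | hgt
    · exact absurd h (key r r' hlt)
    · exact Fin.ext heq
    · exact absurd h.symm (key r' r hgt)
  · -- adjacency
    intro mm
    have hmm := mm.isLt
    have hcs : ((mm.castSucc : Fin (s2 - s1 - 2 + 3)) : ℕ) = (mm : ℕ) := rfl
    have hsc : ((mm.succ : Fin (s2 - s1 - 2 + 3)) : ℕ) = (mm : ℕ) + 1 := rfl
    show G.Adj (W.getVert (s1 + ((mm.castSucc : Fin (s2 - s1 - 2 + 3)) : ℕ)))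
        (W.getVert (s1 + ((mm.succ : Fin (s2 - s1 - 2 + 3)) : ℕ)))
    rw [hcs, hsc, show s1 + ((mm : ℕ) + 1) = (s1 + (mm : ℕ)) + 1 by omega]
    exact W.adj_getVert_succ (by omega)
  · -- b 0 = p i'
    show W.getVert (s1 + ((0 : Fin (s2 - s1 - 2 + 3)) : ℕ)) = p i'
    simp only [Fin.val_zero, Nat.add_zero]
    exact hgi
  · -- b last = p j'
    show W.getVert (s1 + ((Fin.last (s2 - s1 - 2 + 2)) : ℕ)) = p j'
    rw [Fin.val_last, show s1 + (s2 - s1 - 2 + 2) = s2 by omega]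
    exact hgj
  · -- range intersection
    ext x
    constructor
    · rintro ⟨⟨r, rfl⟩, a, ha⟩
      have hr := r.isLt
      have hQsr : Q (s1 + (r : ℕ)) := ⟨a, ha⟩
      have hcase : s1 + (r : ℕ) = s1 ∨ s1 + (r : ℕ) = s2 := by
        by_contra hcon
        push_neg at hcon
        rcases le_or_gt (s1 + (r : ℕ)) mv with hle | hgt
        · exact hs1max _ (by omega) hle hQsr
        · exact hs2min _ hgt (by omega) hQsr
      have hx : W.getVert (s1 + (r : ℕ)) = p i' ∨ W.getVert (s1 + (r : ℕ)) = p j' := by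
        rcases hcase with h | h
        · left; rw [h]; exact hgi
        · right; rw [h]; exact hgj
      simp only [Set.mem_insert_iff, Set.mem_singleton_iff]
      exact hx
    · rintro (rfl | rfl)
      · exact ⟨⟨0, by simpa using hgi⟩, ⟨i', rfl⟩⟩
      · refine ⟨⟨Fin.last _, ?_⟩, ⟨j', rfl⟩⟩
        show W.getVert (s1 + ((Fin.last (s2 - s1 - 2 + 2)) : ℕ)) = p j'
        rw [Fin.val_last, show s1 + (s2 - s1 - 2 + 2) = s2 by omega]
        exact hgj
  · -- isometric
    refine aux_iso hG p hp i' j' _ ?_ ?_ ?_ ?_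
    · rw [hi'v, hj'v]; omega
    · show W.getVert (s1 + ((0 : Fin (s2 - s1 - 2 + 3)) : ℕ)) = p i'
      simp only [Fin.val_zero, Nat.add_zero]
      exact hgi
    · show W.getVert (s1 + ((Fin.last (s2 - s1 - 2 + 2)) : ℕ)) = p j'
      rw [Fin.val_last, show s1 + (s2 - s1 - 2 + 2) = s2 by omega]
      exact hgj
    · intro r r' h
      show G.dist (W.getVert (s1 + (r : ℕ))) (W.getVert (s1 + (r' : ℕ))) = (r' : ℕ) - (r : ℕ)
      have hr' := r'.isLt
      have := geo (s1 + (r : ℕ)) (s1 + (r' : ℕ)) (by omega) (by omega)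
      omega
  · -- v in range b
    refine ⟨⟨mv - s1, by omega⟩, ?_⟩
    show W.getVert (s1 + ((⟨mv - s1, by omega⟩ : Fin (s2 - s1 - 2 + 3)) : ℕ)) = v
    rw [Fin.val_mk, show s1 + (mv - s1) = mv by omega]
    exact hWv
end

section
/- Let G be a finite connected simple graph and let P be a non-trivial isometric path in G that is bypath-free in G. Then for every vertex v of G not on P, the wide shadow S_P(v) contains at least two vertices. -/
namespace SimpleGraph.Walk

variable {V : Type*} {G : SimpleGraph V} {u w : V}

lemma dist_getVert_le_s13 (W : G.Walk u w) {m n : ℕ} (hmn : m ≤ n) :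
    G.dist (W.getVert m) (W.getVert n) ≤ n - m :=
  calc G.dist (W.getVert m) (W.getVert n)
      = G.dist (W.getVert m) ((W.drop m).getVert (n - m)) := by
        rw [drop_getVert, Nat.add_sub_cancel' hmn]
    _ ≤ ((W.drop m).take (n - m)).length := dist_le _
    _ ≤ n - m := by simp

lemma dist_getVert_of_length_eq_dist (W : G.Walk u w) (hW : W.length = G.dist u w)
    {m n : ℕ} (hmn : m ≤ n) (hn : n ≤ W.length) :
    G.dist (W.getVert m) (W.getVert n) = n - m := by
  have h₁ := W.dist_getVert_le_s13 (Nat.zero_le m)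
  have h₂ := W.dist_getVert_le_s13 hmn
  have h₃ := W.dist_getVert_le_s13 hn
  rw [getVert_zero] at h₁
  rw [getVert_length] at h₃
  have := (W.take m).reachable.dist_triangle_left w
  have := (W.drop n).reachable.dist_triangle_right (W.getVert m)
  omega

end SimpleGraph.Walk

open SimpleGraph

lemma replaceSeg_apply_cases {V : Type*} {k t : ℕ} (p : Fin k → V) (b : Fin t → V)
    {i j : Fin k} (hij : (i : ℕ) + t = j + 1) (m : Fin ((i : ℕ) + t + (k - 1 - (j : ℕ)))) :
    (∃ c : Fin k, (c < i ∨ j < c) ∧ (c : ℕ) = m ∧ replaceSeg p b i j m = p c) ∨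
      ∃ s : Fin t, (i : ℕ) + s = m ∧ replaceSeg p b i j m = b s := by
  have := m.isLt
  unfold replaceSeg
  split_ifs with h₁ h₂
  · exact .inl ⟨_, .inl h₁, rfl, rfl⟩
  · exact .inr ⟨_, by simp only; omega, rfl⟩
  · exact .inl ⟨_, .inr (by rw [Fin.lt_def]; simp only; omega), by simp only; omega, rfl⟩

namespace IsIsometricPath

variable {V : Type*} {G : SimpleGraph V} {k : ℕ} {p : Fin k → V}

lemma injective (hp : IsIsometricPath G p) : Function.Injective p := by
  intro a b hab
  have := hp a b
  rw [hab, dist_self] at this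
  exact Fin.ext (by omega)

lemma apply_mem_pathWideShadow_iff (hp : IsIsometricPath G p) (a : Fin k) (v : V) :
    p a ∈ pathWideShadow G p v ↔ ∀ b : Fin k, ((a : ℤ) - b).natAbs ≤ G.dist v (p b) := by
  simp [pathWideShadow, hp a]

section Geodesic

variable {i j : Fin k} (Q : G.Walk (p i) (p j))

lemma dist_getVert_getVert (hp : IsIsometricPath G p) (hQ : (i : ℕ) + Q.length = j)
    {s s' : ℕ} (hss' : s ≤ s') (hs' : s' ≤ Q.length) :
    G.dist (Q.getVert s) (Q.getVert s') = s' - s :=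
  Q.dist_getVert_of_length_eq_dist (by have := hp i j; omega) hss' hs'

lemma val_eq_of_getVert_eq (hp : IsIsometricPath G p) (hQ : (i : ℕ) + Q.length = j)
    {s : ℕ} (hs : s ≤ Q.length) {c : Fin k} (hc : Q.getVert s = p c) : (c : ℕ) = i + s := by
  have h₁ := hp.dist_getVert_getVert Q hQ (Nat.zero_le s) hs
  have h₂ := hp.dist_getVert_getVert Q hQ hs le_rfl
  rw [Walk.getVert_zero, hc] at h₁
  rw [Walk.getVert_length, hc] at h₂
  have := hp i c
  have := hp c j
  omega

lemma dist_apply_getVert (hG : G.Connected) (hp : IsIsometricPath G p)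
    (hQ : (i : ℕ) + Q.length = j) {c : Fin k} (hc : c ≤ i ∨ j ≤ c) {s : ℕ}
    (hs : s ≤ Q.length) :
    G.dist (p c) (Q.getVert s) = ((i + s : ℕ) - (c : ℤ)).natAbs := by
  have h₁ := hp.dist_getVert_getVert Q hQ (Nat.zero_le s) hs
  have h₂ := hp.dist_getVert_getVert Q hQ hs le_rfl
  rw [Walk.getVert_zero] at h₁
  rw [Walk.getVert_length] at h₂
  have := hp c i
  have := hp c j
  have := dist_comm (G := G) (u := p j) (v := Q.getVert s)
  have := dist_comm (G := G) (u := p i) (v := Q.getVert s)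
  have := hG.dist_triangle (u := p c) (v := p i) (w := Q.getVert s)
  have := hG.dist_triangle (u := p c) (v := p j) (w := Q.getVert s)
  have := hG.dist_triangle (u := p c) (v := Q.getVert s) (w := p j)
  have := hG.dist_triangle (u := p c) (v := Q.getVert s) (w := p i)
  rw [Fin.le_def, Fin.le_def] at hc
  omega

lemma isIsometricPath_replaceSeg (hG : G.Connected) (hp : IsIsometricPath G p)
    (hQ : (i : ℕ) + Q.length = j) {t : ℕ} (ht : Q.length = t + 2) :
    IsIsometricPath G (replaceSeg p (fun s : Fin (t + 3) => Q.getVert s) i j) := by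
  intro m m'
  have hij : (i : ℕ) + (t + 3) = j + 1 := by omega
  have hout : ∀ c : Fin k, c < i ∨ j < c → c ≤ i ∨ j ≤ c := fun c => Or.imp le_of_lt le_of_lt
  rcases replaceSeg_apply_cases p _ hij m with ⟨c, hc, hcm, he⟩ | ⟨s, hsm, he⟩ <;>
    rcases replaceSeg_apply_cases p _ hij m' with ⟨c', hc', hcm', he'⟩ | ⟨s', hsm', he'⟩ <;>
    rw [he, he']
  · rw [hp c c', hcm, hcm']
  · rw [hp.dist_apply_getVert Q hG hQ (hout c hc) (by omega)]
    omega
  · rw [dist_comm, hp.dist_apply_getVert Q hG hQ (hout c' hc') (by omega)]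
    omega
  · rcases le_total (s : ℕ) s' with h | h
    · rw [hp.dist_getVert_getVert Q hQ h (by omega)]
      omega
    · rw [dist_comm, hp.dist_getVert_getVert Q hQ h (by omega)]
      omega

lemma isBypathAt_of_walk (hG : G.Connected) (hp : IsIsometricPath G p)
    (hQ : (i : ℕ) + Q.length = j) {t : ℕ} (ht : Q.length = t + 2)
    (hint : ∀ s, 0 < s → s < Q.length → Q.getVert s ∉ Set.range p) :
    IsBypathAt G p (fun s : Fin (t + 3) => Q.getVert s) i j := by
  have hlast : Q.getVert (Fin.last (t + 2) : ℕ) = p j := by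
    rw [Fin.val_last, ← ht, Walk.getVert_length]
  refine ⟨Fin.lt_def.2 (by omega), fun s s' hss' => ?_, fun m => ?_, Q.getVert_zero, hlast,
    ?_, hp.isIsometricPath_replaceSeg Q hG hQ ht⟩
  · have hpath := Q.isPath_of_length_eq_dist (by have := hp i j; omega)
    have hs := s.isLt
    have hs' := s'.isLt
    exact Fin.ext (hpath.getVert_injOn (by simp only [Set.mem_ofPred_eq]; omega)
      (by simp only [Set.mem_ofPred_eq]; omega) hss')
  · simpa using Q.adj_getVert_succ (i := m) (by omega)
  · ext x
    constructor
    · rintro ⟨⟨s, rfl⟩, hx⟩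
      by_cases h0 : (s : ℕ) = 0
      · exact .inl (by simp only [h0, Walk.getVert_zero])
      by_cases hl : (s : ℕ) = t + 2
      · exact .inr (by simp only [hl]; exact hlast)
      exact absurd hx (hint s (by omega) (by have := s.isLt; omega))
    · rintro (rfl | rfl)
      · exact ⟨⟨0, Q.getVert_zero⟩, i, rfl⟩
      · exact ⟨⟨_, hlast⟩, j, rfl⟩

end Geodesic

end IsIsometricPath

theorem BypathFree.lt_add_dist_add_dist {V : Type*} {G : SimpleGraph V} (hG : G.Connected)
    {k : ℕ} {p : Fin k → V} (hp : IsIsometricPath G p) (hfree : BypathFree G p) {v : V}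
    (hv : v ∉ Set.range p) (a b : Fin k) : (b : ℕ) < a + G.dist v (p a) + G.dist v (p b) := by
  induction hn : (b : ℕ) - a using Nat.strong_induction_on generalizing a b with
  | _ n ih =>
  have hpos : ∀ c, 0 < G.dist v (p c) := fun c => hG.pos_dist_of_ne fun h => hv ⟨c, h.symm⟩
  by_contra! hle
  have htight : (a : ℕ) + G.dist v (p a) + G.dist v (p b) = b := by
    have := hp a b
    have := hG.dist_triangle (u := p a) (v := v) (w := p b)
    have := dist_comm (G := G) (u := p a) (v := v)
    omega
  obtain ⟨W₁, hW₁⟩ := hG.exists_walk_length_eq_dist v (p a)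
  obtain ⟨W₂, hW₂⟩ := hG.exists_walk_length_eq_dist v (p b)
  set Q := W₁.reverse.append W₂
  have hQ : Q.length = G.dist v (p a) + G.dist v (p b) := by simp [Q, hW₁, hW₂]
  have hQv : Q.getVert (G.dist v (p a)) = v := by simp [Q, Walk.getVert_append, hW₁]
  have hlen : 2 ≤ Q.length := by have := hpos a; have := hpos b; omega
  refine hfree (Q.length - 2) _ a b (hp.isBypathAt_of_walk Q hG (by omega) (by omega) ?_)
  rintro s hs₀ hs ⟨c, hc⟩
  have hcs := hp.val_eq_of_getVert_eq Q (by omega) hs.le hc.symm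
  rcases le_total (G.dist v (p a)) s with h | h
  · -- `v` lies between `p a` and `p c` on `Q`, so `(a, c)` is a closer tight pair
    have hvc := hp.dist_getVert_getVert Q (by omega) h hs.le
    rw [hQv, ← hc] at hvc
    exact (ih s (by omega) a c (by omega)).ne' (by omega)
  · -- `v` lies between `p c` and `p b` on `Q`, so `(c, b)` is a closer tight pair
    have hvc := hp.dist_getVert_getVert Q (by omega) h (by omega)
    rw [hQv, ← hc, dist_comm] at hvc
    exact (ih (n - s) (by omega) c b (by omega)).ne' (by omega)

lemma Fin.exists_consecutive_forall_natAbs_sub_le {k : ℕ} (hk : 2 ≤ k) (f : Fin k → ℕ)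
    (hf : ∀ a b : Fin k, (b : ℕ) < a + f a + f b) :
    ∃ a b : Fin k, (b : ℕ) = a + 1 ∧
      ∀ c : Fin k, ((a : ℤ) - c).natAbs ≤ f c ∧ ((b : ℤ) - c).natAbs ≤ f c := by
  have hne : (Finset.univ : Finset (Fin k)).Nonempty := ⟨⟨0, by omega⟩, Finset.mem_univ _⟩
  -- `a` is the largest left endpoint `c - f c` (truncated at `0`)
  set m := Finset.univ.sup fun c : Fin k => (c : ℕ) - f c
  obtain ⟨c₀, -, hc₀⟩ := Finset.exists_mem_eq_sup _ hne fun c : Fin k => (c : ℕ) - f c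
  have hle : ∀ c : Fin k, (c : ℕ) - f c ≤ m := fun c =>
    Finset.le_sup (f := fun c : Fin k => (c : ℕ) - f c) (Finset.mem_univ c)
  have hm : m + 1 < k := by
    have : m ≤ k - 2 := Finset.sup_le fun c _ => by have := hf c c; omega
    omega
  refine ⟨⟨m, by omega⟩, ⟨m + 1, hm⟩, rfl, fun c => ?_⟩
  have := hle c
  have := hf c c₀
  have := hf c c
  simp only
  omega

theorem bypathFree_wideShadow_two_general {V : Type*} (G : SimpleGraph V)
    (hG : G.Connected) {k : ℕ} (p : Fin k → V) (hp : IsIsometricPath G p)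
    (hk : 3 ≤ k) (hfree : BypathFree G p) (v : V) (hv : v ∉ Set.range p) :
    ∃ y z, y ≠ z ∧ y ∈ pathWideShadow G p v ∧ z ∈ pathWideShadow G p v := by
  obtain ⟨a, b, hab, hshadow⟩ := Fin.exists_consecutive_forall_natAbs_sub_le (by omega)
    (fun c => G.dist v (p c)) (hfree.lt_add_dist_add_dist hG hp hv)
  refine ⟨p a, p b, hp.injective.ne fun h => by simp [h] at hab, ?_, ?_⟩
  · exact (hp.apply_mem_pathWideShadow_iff a v).2 fun c => (hshadow c).1
  · exact (hp.apply_mem_pathWideShadow_iff b v).2 fun c => (hshadow c).2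

/-- if `P` is a non-trivial isometric path in `G` (at least 3 vertices)
which is bypath-free in `G`, then for every vertex `v` not on `P`, the wide shadow
`S_P(v)` contains at least two vertices. -/
theorem bypathFree_wideShadow_two {V : Type*} [Fintype V] (G : SimpleGraph V)
    (hG : G.Connected) {k : ℕ} (p : Fin k → V) (hp : IsIsometricPath G p)
    (hk : 3 ≤ k) (hfree : BypathFree G p) (v : V) (hv : v ∉ Set.range p) :
    ∃ y z, y ≠ z ∧ y ∈ pathWideShadow G p v ∧ z ∈ pathWideShadow G p v :=
  bypathFree_wideShadow_two_general G hG p hp hk hfree v hv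
end

section
/- Let G be a finite connected simple graph and let P be an isometric path in G that is bypath-free in G. Then every subpath of P is an isometric path in G that is bypath-free in G. -/
lemma replaceSeg_left {V : Type*} {k t : ℕ} (p : Fin k → V) (b : Fin t → V) (i j : Fin k)
    (u : Fin ((i : ℕ) + t + (k - 1 - (j : ℕ)))) (hu : (u : ℕ) < (i : ℕ)) (h : (u : ℕ) < k) :
    replaceSeg p b i j u = p ⟨(u : ℕ), h⟩ := by
  simp only [replaceSeg]
  rw [dif_pos hu]

lemma replaceSeg_mid {V : Type*} {k t : ℕ} (p : Fin k → V) (b : Fin t → V) (i j : Fin k)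
    (u : Fin ((i : ℕ) + t + (k - 1 - (j : ℕ)))) (c : ℕ) (hc : c < t)
    (hu : (u : ℕ) = (i : ℕ) + c) :
    replaceSeg p b i j u = b ⟨c, hc⟩ := by
  simp only [replaceSeg]
  rw [dif_neg (by omega), dif_pos (by omega)]
  exact congrArg b (Fin.ext (show (u:ℕ) - (i:ℕ) = c by omega))

lemma replaceSeg_right {V : Type*} {k t : ℕ} (p : Fin k → V) (b : Fin t → V) (i j : Fin k)
    (u : Fin ((i : ℕ) + t + (k - 1 - (j : ℕ)))) (hu : (i : ℕ) + t ≤ (u : ℕ))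
    (s : ℕ) (hs : s < k) (hsv : (u : ℕ) - ((i : ℕ) + t) + (j : ℕ) + 1 = s) :
    replaceSeg p b i j u = p ⟨s, hs⟩ := by
  simp only [replaceSeg]
  rw [dif_neg (by omega), dif_neg (by omega)]
  exact congrArg p (Fin.ext hsv)

/-- every subpath of an isometric bypath-free path in `G` is again an
isometric bypath-free path in `G`. -/
theorem subpath_isometric_bypathFree {V : Type*} [Fintype V] (G : SimpleGraph V)
    (hG : G.Connected) {k : ℕ} (p : Fin k → V) (hp : IsIsometricPath G p)
    (hfree : BypathFree G p) (a b : ℕ) (hab : a ≤ b) (hbk : b < k) :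
    IsIsometricPath G
        (fun m : Fin (b - a + 1) => p ⟨a + (m : ℕ), by have := m.isLt; omega⟩) ∧
      BypathFree G
        (fun m : Fin (b - a + 1) => p ⟨a + (m : ℕ), by have := m.isLt; omega⟩) := by
  have key : ∀ (s1 s2 : ℕ) (h1 : s1 < k) (h2 : s2 < k),
      G.dist (p ⟨s1, h1⟩) (p ⟨s2, h2⟩) = ((s1 : ℤ) - (s2 : ℤ)).natAbs :=
    fun s1 s2 h1 h2 => hp ⟨s1, h1⟩ ⟨s2, h2⟩
  constructor
  · intro i j
    have hi := i.isLt; have hj := j.isLt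
    exact (key (a + (i : ℕ)) (a + (j : ℕ)) (by omega) (by omega)).trans (by omega)
  · intro t bb i j hB
    obtain ⟨hij, hinj, hadj, h0, hlast, hrange, hiso⟩ := hB
    have hijv : (i : ℕ) < (j : ℕ) := hij
    have hi := i.isLt; have hj := j.isLt
    have hI : a + (i : ℕ) < k := by omega
    have hJ : a + (j : ℕ) < k := by omega
    have hz : 0 < t + 3 := by omega
    have hz2 : t + 2 < t + 3 := by omega
    have h0' : bb ⟨0, hz⟩ = p ⟨a + (i : ℕ), hI⟩ := h0
    have hlast' : bb ⟨t + 2, hz2⟩ = p ⟨a + (j : ℕ), hJ⟩ := hlast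
    -- distances inside the bypath, from the isometry of the replaced subpath
    have hdd : ∀ (c c' : ℕ) (hc : c < t + 3) (hc' : c' < t + 3),
        G.dist (bb ⟨c, hc⟩) (bb ⟨c', hc'⟩) = ((c : ℤ) - (c' : ℤ)).natAbs := by
      intro c c' hc hc'
      have pc : (i : ℕ) + c < (i : ℕ) + (t + 3) + (b - a + 1 - 1 - (j : ℕ)) := by omega
      have pc' : (i : ℕ) + c' < (i : ℕ) + (t + 3) + (b - a + 1 - 1 - (j : ℕ)) := by omega
      have h1 := hiso ⟨(i : ℕ) + c, pc⟩ ⟨(i : ℕ) + c', pc'⟩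
      rw [replaceSeg_mid _ bb i j ⟨(i : ℕ) + c, pc⟩ c hc rfl,
          replaceSeg_mid _ bb i j ⟨(i : ℕ) + c', pc'⟩ c' hc' rfl] at h1
      have e1 : ((⟨(i : ℕ) + c, pc⟩ : Fin _) : ℕ) = (i : ℕ) + c := rfl
      have e2 : ((⟨(i : ℕ) + c', pc'⟩ : Fin _) : ℕ) = (i : ℕ) + c' := rfl
      omega
    have h2 := hdd 0 (t + 2) hz hz2
    rw [h0', hlast'] at h2
    have h3 := key (a + (i : ℕ)) (a + (j : ℕ)) hI hJ
    have hJt : a + (j : ℕ) = a + (i : ℕ) + (t + 2) := by omega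
    -- the isometry of the replaced full path
    have hIso : ∀ u v : Fin ((a + (i : ℕ)) + (t + 3) + (k - 1 - (a + (j : ℕ)))),
        (u : ℕ) ≤ (v : ℕ) →
        G.dist (replaceSeg p bb ⟨a + (i : ℕ), hI⟩ ⟨a + (j : ℕ), hJ⟩ u)
            (replaceSeg p bb ⟨a + (i : ℕ), hI⟩ ⟨a + (j : ℕ), hJ⟩ v)
          = (((u : ℕ) : ℤ) - ((v : ℕ) : ℤ)).natAbs := by
      intro u v huv
      have hui := u.isLt; have hvi := v.isLt
      by_cases hu1 : (u : ℕ) < a + (i : ℕ)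
      · by_cases hv1 : (v : ℕ) < a + (i : ℕ)
        · have hu' : (u : ℕ) < k := by omega
          have hv' : (v : ℕ) < k := by omega
          rw [replaceSeg_left p bb ⟨a + (i : ℕ), hI⟩ ⟨a + (j : ℕ), hJ⟩ u hu1 hu',
              replaceSeg_left p bb ⟨a + (i : ℕ), hI⟩ ⟨a + (j : ℕ), hJ⟩ v hv1 hv',
              key _ _ hu' hv']
        · by_cases hv2 : (v : ℕ) < a + (i : ℕ) + (t + 3)
          · -- u left, v inside the bypath
            have hc : (v : ℕ) - (a + (i : ℕ)) < t + 3 := by omega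
            have hu' : (u : ℕ) < k := by omega
            rw [replaceSeg_left p bb ⟨a + (i : ℕ), hI⟩ ⟨a + (j : ℕ), hJ⟩ u hu1 hu',
                replaceSeg_mid p bb ⟨a + (i : ℕ), hI⟩ ⟨a + (j : ℕ), hJ⟩ v _ hc
                  (show (v : ℕ) = (a + (i : ℕ)) + ((v : ℕ) - (a + (i : ℕ))) by omega)]
            have T1 := hG.dist_triangle (u := p ⟨(u : ℕ), hu'⟩)
              (v := p ⟨a + (i : ℕ), hI⟩) (w := bb ⟨(v : ℕ) - (a + (i : ℕ)), hc⟩)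
            have T2 := hG.dist_triangle (u := p ⟨(u : ℕ), hu'⟩)
              (v := bb ⟨(v : ℕ) - (a + (i : ℕ)), hc⟩) (w := p ⟨a + (j : ℕ), hJ⟩)
            have A := key (u : ℕ) (a + (i : ℕ)) hu' hI
            have D := key (u : ℕ) (a + (j : ℕ)) hu' hJ
            have B := hdd 0 ((v : ℕ) - (a + (i : ℕ))) hz hc
            rw [h0'] at B
            have C := hdd ((v : ℕ) - (a + (i : ℕ))) (t + 2) hc hz2
            rw [hlast'] at C
            omega
          · -- u left, v right
            have hu' : (u : ℕ) < k := by omega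
            have hv' : (v : ℕ) < k := by omega
            rw [replaceSeg_left p bb ⟨a + (i : ℕ), hI⟩ ⟨a + (j : ℕ), hJ⟩ u hu1 hu',
                replaceSeg_right p bb ⟨a + (i : ℕ), hI⟩ ⟨a + (j : ℕ), hJ⟩ v
                  (show a + (i : ℕ) + (t + 3) ≤ (v : ℕ) by omega) (v : ℕ) hv'
                  (show (v : ℕ) - ((a + (i : ℕ)) + (t + 3)) + (a + (j : ℕ)) + 1 = (v : ℕ) by omega),
                key _ _ hu' hv']
      · by_cases hu2 : (u : ℕ) < a + (i : ℕ) + (t + 3)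
        · have hcu : (u : ℕ) - (a + (i : ℕ)) < t + 3 := by omega
          by_cases hv2 : (v : ℕ) < a + (i : ℕ) + (t + 3)
          · have hcv : (v : ℕ) - (a + (i : ℕ)) < t + 3 := by omega
            rw [replaceSeg_mid p bb ⟨a + (i : ℕ), hI⟩ ⟨a + (j : ℕ), hJ⟩ u _ hcu
                  (show (u : ℕ) = (a + (i : ℕ)) + ((u : ℕ) - (a + (i : ℕ))) by omega),
                replaceSeg_mid p bb ⟨a + (i : ℕ), hI⟩ ⟨a + (j : ℕ), hJ⟩ v _ hcv
                  (show (v : ℕ) = (a + (i : ℕ)) + ((v : ℕ) - (a + (i : ℕ))) by omega),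
                hdd _ _ hcu hcv]
            omega
          · -- u inside bypath, v right
            have hv' : (v : ℕ) < k := by omega
            rw [replaceSeg_mid p bb ⟨a + (i : ℕ), hI⟩ ⟨a + (j : ℕ), hJ⟩ u _ hcu
                  (show (u : ℕ) = (a + (i : ℕ)) + ((u : ℕ) - (a + (i : ℕ))) by omega),
                replaceSeg_right p bb ⟨a + (i : ℕ), hI⟩ ⟨a + (j : ℕ), hJ⟩ v
                  (show a + (i : ℕ) + (t + 3) ≤ (v : ℕ) by omega) (v : ℕ) hv'
                  (show (v : ℕ) - ((a + (i : ℕ)) + (t + 3)) + (a + (j : ℕ)) + 1 = (v : ℕ) by omega)]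
            have T1 := hG.dist_triangle (u := bb ⟨(u : ℕ) - (a + (i : ℕ)), hcu⟩)
              (v := p ⟨a + (j : ℕ), hJ⟩) (w := p ⟨(v : ℕ), hv'⟩)
            have T2 := hG.dist_triangle (u := p ⟨a + (i : ℕ), hI⟩)
              (v := bb ⟨(u : ℕ) - (a + (i : ℕ)), hcu⟩) (w := p ⟨(v : ℕ), hv'⟩)
            have A := key (a + (j : ℕ)) (v : ℕ) hJ hv'
            have D := key (a + (i : ℕ)) (v : ℕ) hI hv'
            have B := hdd 0 ((u : ℕ) - (a + (i : ℕ))) hz hcu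
            rw [h0'] at B
            have C := hdd ((u : ℕ) - (a + (i : ℕ))) (t + 2) hcu hz2
            rw [hlast'] at C
            omega
        · -- both right
          have hu' : (u : ℕ) < k := by omega
          have hv' : (v : ℕ) < k := by omega
          rw [replaceSeg_right p bb ⟨a + (i : ℕ), hI⟩ ⟨a + (j : ℕ), hJ⟩ u
                (show a + (i : ℕ) + (t + 3) ≤ (u : ℕ) by omega) (u : ℕ) hu'
                (show (u : ℕ) - ((a + (i : ℕ)) + (t + 3)) + (a + (j : ℕ)) + 1 = (u : ℕ) by omega),
              replaceSeg_right p bb ⟨a + (i : ℕ), hI⟩ ⟨a + (j : ℕ), hJ⟩ v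
                (show a + (i : ℕ) + (t + 3) ≤ (v : ℕ) by omega) (v : ℕ) hv'
                (show (v : ℕ) - ((a + (i : ℕ)) + (t + 3)) + (a + (j : ℕ)) + 1 = (v : ℕ) by omega),
              key _ _ hu' hv']
    -- the range condition
    have hrange' : Set.range bb ∩ Set.range p =
        {p ⟨a + (i : ℕ), hI⟩, p ⟨a + (j : ℕ), hJ⟩} := by
      ext x
      simp only [Set.mem_inter_iff, Set.mem_range, Set.mem_insert_iff,
        Set.mem_singleton_iff]
      constructor
      · rintro ⟨⟨m, hm⟩, ⟨s, hs⟩⟩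
        have hm' : bb ⟨(m : ℕ), m.isLt⟩ = x := hm
        have hs' : p ⟨(s : ℕ), s.isLt⟩ = x := hs
        by_cases hsa : a ≤ (s : ℕ) ∧ (s : ℕ) ≤ b
        · have hx : x ∈ Set.range bb ∩
              Set.range (fun m : Fin (b - a + 1) =>
                p ⟨a + (m : ℕ), by have := m.isLt; omega⟩) := by
            refine ⟨⟨m, hm⟩, ⟨⟨(s : ℕ) - a, by omega⟩, ?_⟩⟩
            exact (congrArg p (Fin.ext
              (show a + ((s : ℕ) - a) = (s : ℕ) by omega))).trans hs
          rw [hrange] at hx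
          rcases hx with h | h
          · exact Or.inl h
          · exact Or.inr h
        · exfalso
          have hmlt := m.isLt
          have hslt := s.isLt
          have E1 := hdd 0 (m : ℕ) hz m.isLt
          rw [h0', hm', ← hs'] at E1
          have E2 := hdd (m : ℕ) (t + 2) m.isLt hz2
          rw [hlast', hm', ← hs'] at E2
          have K1 := key (a + (i : ℕ)) (s : ℕ) hI s.isLt
          have K2 := key (s : ℕ) (a + (j : ℕ)) s.isLt hJ
          omega
      · rintro (h | h)
        · exact ⟨⟨⟨0, hz⟩, h0'.trans h.symm⟩, ⟨⟨a + (i : ℕ), hI⟩, h.symm⟩⟩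
        · exact ⟨⟨⟨t + 2, hz2⟩, hlast'.trans h.symm⟩, ⟨⟨a + (j : ℕ), hJ⟩, h.symm⟩⟩
    refine hfree t bb ⟨a + (i : ℕ), hI⟩ ⟨a + (j : ℕ), hJ⟩
      ⟨Fin.mk_lt_mk.mpr (by omega), hinj, hadj, h0, hlast, hrange', ?_⟩
    intro u v
    rcases le_total (u : ℕ) (v : ℕ) with huv | huv
    · exact hIso u v huv
    · rw [SimpleGraph.dist_comm, hIso v u huv]
      omega
end

section
/- For all integers s ≥ 1 and m ≥ 2 with t = 2m − 1, the graph H(t,s) has diameter 2: any two distinct vertices of H(t,s) are at distance at most 2, and there exist two vertices at distance exactly 2. -/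
/-!
Any two attachment sets are `m`-subsets of a `(2m-1)`-set, so they meet; hence two vertices of
`K_X`, `K_Y` outside `T` have a common neighbour in `X ∩ Y`, and every vertex of `T` reaches a
vertex of `K_X` through some vertex of `X`. Since `m < 2m - 1`, some vertex of `T` lies outside an
attachment set `X`, and is then not adjacent to the vertices of `K_X` outside `T`.
-/

/-- The vertex set of the graph `H(t,s)` (with `m`-subsets of the `t`-clique used as
attachment sets): the `t` vertices of the complete graph `T` together with, for each
`m`-subset `X` of `V(T)`, the `s` vertices of `K_X` not identified with `X`. -/
def HVert (t m s : ℕ) : Type :=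
  Fin t ⊕ ({X : Finset (Fin t) // X.card = m} × Fin s)

/-- The graph `H(t,s)`: a complete graph `T` on `t` vertices, and for each `m`-subset
`X` of `V(T)` a complete graph `K_X` on `s + m` vertices, with `m` of the vertices of
`K_X` identified with `X`. -/
def HGraph (t m s : ℕ) : SimpleGraph (HVert t m s) :=
  SimpleGraph.fromRel (fun a b =>
    match a, b with
    | Sum.inl _, Sum.inl _ => True
    | Sum.inl x, Sum.inr q => x ∈ q.1.1
    | Sum.inr _, Sum.inl _ => False
    | Sum.inr q, Sum.inr r => q.1 = r.1)

namespace SimpleGraph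

variable {V : Type*} {G : SimpleGraph V} {u v w : V}

lemma dist_le_two_of_adj_of_adj (huw : G.Adj u w) (hwv : G.Adj w v) : G.dist u v ≤ 2 :=
  G.dist_le (.cons huw (.cons hwv .nil))

lemma dist_eq_two_of_adj_of_adj (huw : G.Adj u w) (hwv : G.Adj w v) (huv : u ≠ v)
    (hnadj : ¬ G.Adj u v) : G.dist u v = 2 := by
  have hreach : G.Reachable u v := (huw.toWalk.append hwv.toWalk).reachable
  have := hreach.one_lt_dist_of_ne_of_not_adj huv hnadj
  have := dist_le_two_of_adj_of_adj huw hwv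
  omega

end SimpleGraph

namespace HGraph

variable {t m s : ℕ}

lemma inl_adj_inl {x y : Fin t} : (HGraph t m s).Adj (.inl x) (.inl y) ↔ x ≠ y := by
  rw [HGraph]
  exact (SimpleGraph.fromRel_adj (V := HVert t m s) _ _ _).trans
    ((and_iff_left (Or.inl trivial)).trans Sum.inl_injective.ne_iff)

lemma inl_adj_inr {x : Fin t} {q : {X : Finset (Fin t) // X.card = m} × Fin s} :
    (HGraph t m s).Adj (.inl x) (.inr q) ↔ x ∈ q.1.1 := by
  rw [HGraph]
  exact (SimpleGraph.fromRel_adj (V := HVert t m s) _ _ _).trans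
    ((and_iff_right Sum.inl_ne_inr).trans (or_iff_left id))

lemma attachment_nonempty (hm : 0 < m) (q : {X : Finset (Fin t) // X.card = m} × Fin s) :
    q.1.1.Nonempty :=
  Finset.card_pos.mp (by rw [q.1.2]; exact hm)

lemma dist_inl_inl_le_two (x y : Fin t) : (HGraph t m s).dist (.inl x) (.inl y) ≤ 2 := by
  by_cases hxy : x = y
  · subst hxy
    exact SimpleGraph.dist_self.trans_le (Nat.zero_le 2)
  · exact (SimpleGraph.dist_eq_one_iff_adj.2 (inl_adj_inl.2 hxy)).trans_le one_le_two

lemma dist_inl_inr_le_two (hm : 0 < m) (x : Fin t)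
    (q : {X : Finset (Fin t) // X.card = m} × Fin s) :
    (HGraph t m s).dist (.inl x) (.inr q) ≤ 2 := by
  obtain ⟨y, hy⟩ := attachment_nonempty hm q
  by_cases hxy : x = y
  · subst hxy
    exact (SimpleGraph.dist_eq_one_iff_adj.2 (inl_adj_inr.2 hy)).trans_le one_le_two
  · exact SimpleGraph.dist_le_two_of_adj_of_adj (inl_adj_inl.2 hxy) (inl_adj_inr.2 hy)

lemma dist_inr_inr_le_two (ht : t < 2 * m) (q r : {X : Finset (Fin t) // X.card = m} × Fin s) :
    (HGraph t m s).dist (.inr q) (.inr r) ≤ 2 := by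
  obtain ⟨x, hx⟩ : (q.1.1 ∩ r.1.1).Nonempty :=
    Finset.inter_nonempty_of_card_lt_card_add_card (Finset.subset_univ _) (Finset.subset_univ _)
      (by rw [Finset.card_univ, Fintype.card_fin, q.1.2, r.1.2]; omega)
  rw [Finset.mem_inter] at hx
  exact SimpleGraph.dist_le_two_of_adj_of_adj (inl_adj_inr.2 hx.1).symm (inl_adj_inr.2 hx.2)

lemma dist_le_two (hm : 0 < m) (ht : t < 2 * m) :
    ∀ a b : HVert t m s, (HGraph t m s).dist a b ≤ 2
  | .inl x, .inl y => dist_inl_inl_le_two x y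
  | .inl x, .inr q => dist_inl_inr_le_two hm x q
  | .inr q, .inl x => SimpleGraph.dist_comm.trans_le (dist_inl_inr_le_two hm x q)
  | .inr q, .inr r => dist_inr_inr_le_two ht q r

lemma dist_inl_inr_eq_two (hm : 0 < m) {x : Fin t}
    {q : {X : Finset (Fin t) // X.card = m} × Fin s} (hx : x ∉ q.1.1) :
    (HGraph t m s).dist (.inl x) (.inr q) = 2 := by
  obtain ⟨y, hy⟩ := attachment_nonempty hm q
  exact SimpleGraph.dist_eq_two_of_adj_of_adj (inl_adj_inl.2 (ne_of_mem_of_not_mem hy hx).symm)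
    (inl_adj_inr.2 hy) Sum.inl_ne_inr (mt inl_adj_inr.1 hx)

lemma exists_notMem_attachment (hmt : m < t) (hs : 0 < s) :
    ∃ (x : Fin t) (q : {X : Finset (Fin t) // X.card = m} × Fin s), x ∉ q.1.1 := by
  let x : Fin t := ⟨0, by omega⟩
  obtain ⟨X, hXx, hX⟩ := Finset.exists_subset_card_eq (s := Finset.univ.erase x) (n := m)
    (by rw [Finset.card_erase_of_mem (Finset.mem_univ x), Finset.card_univ, Fintype.card_fin]
        omega)
  exact ⟨x, (⟨X, hX⟩, ⟨0, hs⟩), fun hx => Finset.notMem_erase x _ (hXx hx)⟩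

end HGraph

/-- for `s ≥ 1`, `m ≥ 2` and `t = 2m - 1`, the graph `H(t,s)` has
diameter 2. -/
theorem HGraph_diam_two (m s : ℕ) (hm : 2 ≤ m) (hs : 1 ≤ s) :
    (∀ a b : HVert (2 * m - 1) m s, (HGraph (2 * m - 1) m s).dist a b ≤ 2) ∧
      ∃ a b : HVert (2 * m - 1) m s, (HGraph (2 * m - 1) m s).dist a b = 2 := by
  refine ⟨HGraph.dist_le_two (by omega) (by omega), ?_⟩
  obtain ⟨x, q, hx⟩ := HGraph.exists_notMem_attachment (t := 2 * m - 1) (m := m) (by omega) hs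
  exact ⟨.inl x, .inr q, HGraph.dist_inl_inr_eq_two (by omega) hx⟩
end

section
/- For all integers s ≥ 1 and m ≥ 2 with t = 2m − 1, a subset A of the vertex set of H(t,s) is a dominating set of H(t,s) if and only if A ∩ V(K_X) ≠ ∅ for every m-element subset X of V(T). -/
/-- The vertex set of the clique `K_X` inside `H(t,s)`: the vertices of `X` together
with the `s` extra vertices attached to `X`. -/
def KVerts (t m s : ℕ) (X : {X : Finset (Fin t) // X.card = m}) :
    Set (HVert t m s) :=
  {v | (∃ x ∈ X.1, v = Sum.inl x) ∨ ∃ i : Fin s, v = Sum.inr (X, i)}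

/-- `A` is a dominating set of `G`: every vertex is in `A` or adjacent to a vertex
of `A`. -/
def IsDominatingSet {W : Type*} (G : SimpleGraph W) (A : Set W) : Prop :=
  ∀ v, v ∈ A ∨ ∃ a ∈ A, G.Adj a v

/-! Every `V(K_X)` is a clique and, as `s ≥ 1`, contains a vertex outside `T` all of whose
neighbours lie in `V(K_X)`; so a dominating set meets every `V(K_X)`. Conversely, every vertex
of `T` lies in some `m`-subset, so the cliques `V(K_X)` cover `H(t,s)` and a set meeting all of
them dominates. -/

theorem Finset.exists_card_eq_and_mem {α : Type*} [Fintype α] (x : α) {m : ℕ} (hm : 1 ≤ m)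
    (hmα : m ≤ Fintype.card α) : ∃ X : Finset α, X.card = m ∧ x ∈ X := by
  obtain ⟨X, hxX, -, hX⟩ := Finset.exists_subsuperset_card_eq (Finset.subset_univ {x})
    (by simpa using hm) (by simpa using hmα)
  exact ⟨X, hX, hxX (Finset.mem_singleton_self x)⟩

namespace IsDominatingSet

variable {W : Type*} {G : SimpleGraph W} {A : Set W}

theorem of_forall_isClique (hA : ∀ v, ∃ C, G.IsClique C ∧ v ∈ C ∧ (A ∩ C).Nonempty) :
    IsDominatingSet G A := by
  intro v
  obtain ⟨C, hC, hv, a, haA, haC⟩ := hA v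
  by_cases hav : a = v
  · exact Or.inl (hav ▸ haA)
  · exact Or.inr ⟨a, haA, hC haC hv hav⟩

theorem inter_nonempty (hdom : IsDominatingSet G A) {C : Set W} {v : W} (hv : v ∈ C)
    (hC : ∀ w, G.Adj w v → w ∈ C) : (A ∩ C).Nonempty := by
  obtain hvA | ⟨a, haA, hav⟩ := hdom v
  · exact ⟨v, hvA, hv⟩
  · exact ⟨a, haA, hC a hav⟩

end IsDominatingSet

namespace HGraph

variable {t m s : ℕ}

theorem adj_inl_inl {x y : Fin t} :
    (HGraph t m s).Adj (Sum.inl x) (Sum.inl y) ↔ x ≠ y :=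
  (SimpleGraph.fromRel_adj _ _ _).trans (by unfold HVert; simp)

theorem adj_inl_inr {x : Fin t} {q : {X : Finset (Fin t) // X.card = m} × Fin s} :
    (HGraph t m s).Adj (Sum.inl x) (Sum.inr q) ↔ x ∈ q.1.1 :=
  (SimpleGraph.fromRel_adj _ _ _).trans (by unfold HVert; simp)

theorem adj_inr_inr {q r : {X : Finset (Fin t) // X.card = m} × Fin s} :
    (HGraph t m s).Adj (Sum.inr q) (Sum.inr r) ↔ q ≠ r ∧ q.1 = r.1 :=
  (SimpleGraph.fromRel_adj _ _ _).trans (by unfold HVert; simp [eq_comm])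

theorem isClique_KVerts (X : {X : Finset (Fin t) // X.card = m}) :
    (HGraph t m s).IsClique (KVerts t m s X) := by
  rintro _ (⟨x, hx, rfl⟩ | ⟨i, rfl⟩) _ (⟨y, hy, rfl⟩ | ⟨j, rfl⟩) hne
  · exact adj_inl_inl.mpr fun hxy => hne (hxy ▸ rfl)
  · exact adj_inl_inr.mpr hx
  · exact (adj_inl_inr.mpr hy).symm
  · exact adj_inr_inr.mpr ⟨fun hij => hne (hij ▸ rfl), rfl⟩

theorem inr_mem_KVerts (X : {X : Finset (Fin t) // X.card = m}) (i : Fin s) :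
    Sum.inr (X, i) ∈ KVerts t m s X :=
  Or.inr ⟨i, rfl⟩

theorem mem_KVerts_of_adj_inr {a : HVert t m s} {X : {X : Finset (Fin t) // X.card = m}}
    {i : Fin s} (ha : (HGraph t m s).Adj a (Sum.inr (X, i))) : a ∈ KVerts t m s X := by
  rcases a with x | ⟨Y, j⟩
  · exact Or.inl ⟨x, adj_inl_inr.mp ha, rfl⟩
  · obtain ⟨-, rfl : Y = X⟩ := adj_inr_inr.mp ha
    exact inr_mem_KVerts Y j

theorem exists_mem_KVerts (hT : ∀ x : Fin t, ∃ X : Finset (Fin t), X.card = m ∧ x ∈ X)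
    (v : HVert t m s) : ∃ X, v ∈ KVerts t m s X := by
  rcases v with x | ⟨X, i⟩
  · obtain ⟨X, hX, hx⟩ := hT x
    exact ⟨⟨X, hX⟩, Or.inl ⟨x, hx, rfl⟩⟩
  · exact ⟨X, inr_mem_KVerts X i⟩

end HGraph

theorem HGraph_dominating_iff_general (m s : ℕ) (hs : 1 ≤ s)
    (A : Set (HVert (2 * m - 1) m s)) :
    IsDominatingSet (HGraph (2 * m - 1) m s) A ↔
      ∀ X : {X : Finset (Fin (2 * m - 1)) // X.card = m},
        (A ∩ KVerts (2 * m - 1) m s X).Nonempty := by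
  constructor
  · intro hdom X
    exact hdom.inter_nonempty (HGraph.inr_mem_KVerts X ⟨0, hs⟩)
      fun _ => HGraph.mem_KVerts_of_adj_inr
  · intro hA
    have hT (x : Fin (2 * m - 1)) : ∃ X : Finset (Fin (2 * m - 1)), X.card = m ∧ x ∈ X :=
      Finset.exists_card_eq_and_mem x (by have := x.pos; omega) (by rw [Fintype.card_fin]; omega)
    refine IsDominatingSet.of_forall_isClique fun v => ?_
    obtain ⟨X, hv⟩ := HGraph.exists_mem_KVerts hT v
    exact ⟨_, HGraph.isClique_KVerts X, hv, hA X⟩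

/-- for `s ≥ 1`, `m ≥ 2` and `t = 2m - 1`, a set `A` of vertices of
`H(t,s)` is dominating if and only if it meets `V(K_X)` for every `m`-subset `X`
of `V(T)`. -/
theorem HGraph_dominating_iff (m s : ℕ) (hm : 2 ≤ m) (hs : 1 ≤ s)
    (A : Set (HVert (2 * m - 1) m s)) :
    IsDominatingSet (HGraph (2 * m - 1) m s) A ↔
      ∀ X : {X : Finset (Fin (2 * m - 1)) // X.card = m},
        (A ∩ KVerts (2 * m - 1) m s X).Nonempty :=
  HGraph_dominating_iff_general m s hs A
end

section
/- Let H be a finite connected simple graph, let v_1, …, v_k be vertices of H and let d_1, …, d_k be positive integers such that d_H(v_i, v_j) ≤ d_i + d_j for all i, j ∈ {1, …, k}. Let G be the graph obtained from H by adding one new vertex x and, for each i ∈ {1, …, k}, a new path of length d_i from x to v_i, where these k paths are internally disjoint from each other and their internal vertices are new vertices not in H. Then H is an isometric subgraph of G. -/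
/-!
The lower bound `d_G(a, b) ≥ d_H(a, b)` comes from a potential on `G` that changes by at most
one along every edge and agrees with `d_H(a, ·)` on `H`. Give `x` the value
`M = min_i (d_H(a, v_i) + d_i)`. Then `M ≤ d_H(a, v_i) + d_i` by choice of `M`, and
`d_H(a, v_i) ≤ M + d_i` by the triangle inequality and `d_H(v_i, v_j) ≤ d_i + d_j`, so along the
`i`-th path the potential can be interpolated between `M` and `d_H(a, v_i)` in unit steps.
-/

/-- The graph obtained from `H` by adding one new vertex `x = Sum.inr (Sum.inr ())`
and, for each `i : Fin k`, a new path of length `d i` from `x` to `v i`, the `k`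
paths being internally disjoint and their internal vertices being new.
An internal vertex `⟨(i, j), _⟩` (with `j + 1 < d i`, so there are `d i - 1` of them
for the `i`-th path) is the vertex at distance `j + 1` from `x` on the `i`-th path. -/
def attachPaths {W : Type*} (H : SimpleGraph W) {k : ℕ} (v : Fin k → W)
    (d : Fin k → ℕ) :
    SimpleGraph (W ⊕ ({q : Fin k × ℕ // q.2 + 1 < d q.1} ⊕ Unit)) :=
  SimpleGraph.fromRel (fun a b =>
    match a, b with
    | Sum.inl a, Sum.inl b => H.Adj a b
    | Sum.inr (Sum.inr _), Sum.inr (Sum.inl q) => q.1.2 = 0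
    | Sum.inr (Sum.inr _), Sum.inl w => ∃ i, d i = 1 ∧ w = v i
    | Sum.inr (Sum.inl q), Sum.inr (Sum.inl r) => q.1.1 = r.1.1 ∧ r.1.2 = q.1.2 + 1
    | Sum.inr (Sum.inl q), Sum.inl w => q.1.2 + 2 = d q.1.1 ∧ w = v q.1.1
    | _, _ => False)

lemma exists_forall_le_add_and_le_add {ι : Type*} (c e : ι → ℕ)
    (h : ∀ i j, c i ≤ c j + e j + e i) : ∃ M, ∀ i, M ≤ c i + e i ∧ c i ≤ M + e i := by
  refine ⟨sInf (Set.range fun i => c i + e i), fun i => ⟨Nat.sInf_le ⟨i, rfl⟩, ?_⟩⟩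
  obtain ⟨j, hj⟩ : sInf (Set.range fun i => c i + e i) ∈ Set.range fun i => c i + e i :=
    Nat.sInf_mem ⟨_, i, rfl⟩
  rw [← hj]
  exact h i j

namespace SimpleGraph

variable {V V' : Type*} {G : SimpleGraph V} {G' : SimpleGraph V'}

lemma Walk.le_add_length_of_forall_adj {φ : V → ℕ} (hφ : ∀ u w, G.Adj u w → φ w ≤ φ u + 1)
    {u w : V} (p : G.Walk u w) : φ w ≤ φ u + p.length := by
  induction p with
  | nil => simp
  | cons h p ih =>
    rw [Walk.length_cons]
    have := hφ _ _ h
    omega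

lemma Reachable.le_add_dist_of_forall_adj {φ : V → ℕ} (hφ : ∀ u w, G.Adj u w → φ w ≤ φ u + 1)
    {u w : V} (h : G.Reachable u w) : φ w ≤ φ u + G.dist u w := by
  obtain ⟨p, hp⟩ := h.exists_walk_length_eq_dist
  exact hp ▸ p.le_add_length_of_forall_adj hφ

lemma Reachable.dist_map_le (f : G →g G') {u w : V} (h : G.Reachable u w) :
    G'.dist (f u) (f w) ≤ G.dist u w := by
  obtain ⟨p, hp⟩ := h.exists_walk_length_eq_dist
  simpa only [Walk.length_map, hp] using dist_le (p.map f)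

lemma dist_le_dist_add_one_of_adj (u : V) {v w : V} (h : G.Adj v w) :
    G.dist u w ≤ G.dist u v + 1 := by
  rcases h.diff_dist_adj (u := u) with h | h | h <;> omega

lemma le_add_one_of_fromRel_adj {r : V → V → Prop} {φ : V → ℕ}
    (hr : ∀ u w, r u w → φ w ≤ φ u + 1 ∧ φ u ≤ φ w + 1) {u w : V} (h : (fromRel r).Adj u w) :
    φ w ≤ φ u + 1 := by
  obtain ⟨-, h | h⟩ := h
  exacts [(hr u w h).1, (hr w u h).2]

end SimpleGraph

section attachPaths

variable {W : Type*} (H : SimpleGraph W) {k : ℕ} (v : Fin k → W) (d : Fin k → ℕ)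

@[simps]
def attachPathsInclusion : H →g attachPaths H v d where
  toFun := Sum.inl
  map_rel' h := by
    rw [attachPaths, SimpleGraph.fromRel_adj]
    exact ⟨by simpa using h.ne, Or.inl h⟩

/-- The extension of `r : W → ℕ` giving the new vertex `x` the value `M`: the vertex at distance
`j + 1` from `x` on the `i`-th path gets the smaller of the values obtained by walking in unit
steps up from `M` at `x` and from `r (v i)` at `v i`. -/
def attachPathsExtend (r : W → ℕ) (M : ℕ) :
    W ⊕ ({q : Fin k × ℕ // q.2 + 1 < d q.1} ⊕ Unit) → ℕ
  | Sum.inl w => r w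
  | Sum.inr (Sum.inl q) => min (M + (q.1.2 + 1)) (r (v q.1.1) + (d q.1.1 - 1 - q.1.2))
  | Sum.inr (Sum.inr _) => M

variable {H v d} in
lemma attachPathsExtend_le_add_one_of_adj {r : W → ℕ} {M : ℕ}
    (hr : ∀ x y, H.Adj x y → r y ≤ r x + 1) (hM : ∀ i, M ≤ r (v i) + d i ∧ r (v i) ≤ M + d i)
    (u w) (h : (attachPaths H v d).Adj u w) :
    attachPathsExtend v d r M w ≤ attachPathsExtend v d r M u + 1 := by
  refine SimpleGraph.le_add_one_of_fromRel_adj ?_ h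
  rintro (x | (⟨⟨i, j⟩, _⟩ | _)) (y | (⟨⟨i', j'⟩, _⟩ | _)) h <;> simp only at h
  · exact ⟨hr x y h, hr y x h.symm⟩
  · obtain ⟨_, rfl⟩ := h
    have := hM i
    simp only [attachPathsExtend]
    omega
  · obtain ⟨rfl, rfl⟩ := h
    simp only [attachPathsExtend]
    omega
  · obtain ⟨i, _, rfl⟩ := h
    have := hM i
    simp only [attachPathsExtend]
    omega
  · subst h
    have := hM i'
    simp only [attachPathsExtend]
    omega

end attachPaths

theorem attachPaths_isometric_general {W : Type*} (H : SimpleGraph W)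
    (hH : H.Connected) (k : ℕ) (v : Fin k → W) (d : Fin k → ℕ)
    (hdist : ∀ i j, H.dist (v i) (v j) ≤ d i + d j) :
    ∀ a b : W, (attachPaths H v d).dist (Sum.inl a) (Sum.inl b) = H.dist a b := by
  intro a b
  have hab : H.Reachable a b := hH a b
  have upper := hab.dist_map_le (attachPathsInclusion H v d)
  obtain ⟨M, hM⟩ := exists_forall_le_add_and_le_add (fun i => H.dist a (v i)) d fun i j =>
    calc H.dist a (v i) ≤ H.dist a (v j) + H.dist (v j) (v i) := hH.dist_triangle
      _ ≤ H.dist a (v j) + d j + d i := by rw [add_assoc]; gcongr; exact hdist j i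
  have lower := (hab.map (attachPathsInclusion H v d)).le_add_dist_of_forall_adj
    (attachPathsExtend_le_add_one_of_adj
      (fun _ _ h => SimpleGraph.dist_le_dist_add_one_of_adj a h) hM)
  simp only [attachPathsInclusion_apply, attachPathsExtend, SimpleGraph.dist_self, zero_add] at lower
  exact le_antisymm upper lower

/-- let `H` be a finite connected graph, `v 0, …, v (k-1)` vertices of
`H` and `d 0, …, d (k-1)` positive integers with `d_H(v i, v j) ≤ d i + d j` for all
`i, j`. Let `G` be obtained from `H` by adding a new vertex `x` and internally
disjoint paths of length `d i` from `x` to each `v i` (with new internal vertices).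
Then `H` is an isometric subgraph of `G`. -/
theorem attachPaths_isometric {W : Type*} [Fintype W] (H : SimpleGraph W)
    (hH : H.Connected) (k : ℕ) (v : Fin k → W) (d : Fin k → ℕ)
    (hd : ∀ i, 1 ≤ d i) (hdist : ∀ i j, H.dist (v i) (v j) ≤ d i + d j) :
    ∀ a b : W, (attachPaths H v d).dist (Sum.inl a) (Sum.inl b) = H.dist a b :=
  attachPaths_isometric_general H hH k v d hdist
end
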